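/- arXiv:2010.03748 — 4 statements merged into one kernel-verified Lean document; each statement's English description precedes it below -/
import Mathlib

section
/- Let G be a finite simple connected graph of order n, size m, maximum degree Δ, with p pendent vertices and minimum non-pendent vertex degree δ₁. Then AG(G) ≤ p(Δ+1)/(2√Δ) + (1/(2δ₁))·√((m−p)·(F(G) + 2M₂(G) − p(δ₁+1)²)), with equality if and only if G is isomorphic to the star K_{1,n−1}, or G is regular, or G is (Δ,1)-semiregular. -/
open SimpleGraph

/-- The degree of a vertex, as a natural number (classical, to avoid decidability assumptions). -/
noncomputable def ndeg {V : Type*} [Fintype V] (G : SimpleGraph V) (v : V) : ℕ :=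
  letI := Classical.decRel G.Adj
  G.degree v

/-- The degree of a vertex, as a real number. -/
noncomputable def deg {V : Type*} [Fintype V] (G : SimpleGraph V) (v : V) : ℝ :=
  (ndeg G v : ℝ)

/-- For a symmetric function `f`, `edgeSum G f = Σ_{uv ∈ E(G)} f (d_u) (d_v)`:
each unordered edge is counted twice in the double sum, hence the factor `1/2`. -/
noncomputable def edgeSum {V : Type*} [Fintype V] (G : SimpleGraph V) (f : ℝ → ℝ → ℝ) : ℝ :=
  letI := Classical.decRel G.Adj
  (1 / 2) * ∑ u : V, ∑ w : V, if G.Adj u w then f (deg G u) (deg G w) else 0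

/-- The arithmetic-geometric index `AG(G) = Σ_{uv ∈ E(G)} (1/2)(√(d_u/d_v) + √(d_v/d_u))`. -/
noncomputable def AG {V : Type*} [Fintype V] (G : SimpleGraph V) : ℝ :=
  edgeSum G (fun x y => (Real.sqrt (x / y) + Real.sqrt (y / x)) / 2)

/-- The first geometric-arithmetic index `GA(G) = Σ_{uv ∈ E(G)} 2√(d_u d_v)/(d_u + d_v)`. -/
noncomputable def GA {V : Type*} [Fintype V] (G : SimpleGraph V) : ℝ :=
  edgeSum G (fun x y => 2 * Real.sqrt (x * y) / (x + y))

/-- The forgotten index `F(G) = Σ_{uv ∈ E(G)} (d_u² + d_v²)`. -/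
noncomputable def forgottenIndex {V : Type*} [Fintype V] (G : SimpleGraph V) : ℝ :=
  edgeSum G (fun x y => x ^ 2 + y ^ 2)

/-- The first Zagreb index `M₁(G) = Σ_{uv ∈ E(G)} (d_u + d_v)`. -/
noncomputable def M1 {V : Type*} [Fintype V] (G : SimpleGraph V) : ℝ :=
  edgeSum G (fun x y => x + y)

/-- The second Zagreb index `M₂(G) = Σ_{uv ∈ E(G)} d_u d_v`. -/
noncomputable def M2 {V : Type*} [Fintype V] (G : SimpleGraph V) : ℝ :=
  edgeSum G (fun x y => x * y)

/-- The symmetric division deg index `SDD(G) = Σ_{uv ∈ E(G)} (d_u/d_v + d_v/d_u)`. -/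
noncomputable def SDD {V : Type*} [Fintype V] (G : SimpleGraph V) : ℝ :=
  edgeSum G (fun x y => x / y + y / x)

/-- The atom-bond connectivity index `ABC(G) = Σ_{uv ∈ E(G)} √((d_u + d_v − 2)/(d_u d_v))`. -/
noncomputable def ABC {V : Type*} [Fintype V] (G : SimpleGraph V) : ℝ :=
  edgeSum G (fun x y => Real.sqrt ((x + y - 2) / (x * y)))

/-- `G` is `(s,r)`-semiregular: its vertex set is the disjoint union of two nonempty sets,
all vertices of the first having degree `s` and all vertices of the second degree `r`. -/
def IsSemiregular {V : Type*} [Fintype V] (G : SimpleGraph V) (s r : ℕ) : Prop :=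
  ∃ V₁ V₂ : Set V, V₁.Nonempty ∧ V₂.Nonempty ∧ Disjoint V₁ V₂ ∧ V₁ ∪ V₂ = Set.univ ∧
    (∀ v ∈ V₁, ndeg G v = s) ∧ (∀ v ∈ V₂, ndeg G v = r)

namespace AGaux
open Finset
attribute [local instance] Classical.propDecidable

/-! ### Auxiliary real-analysis lemmas -/

noncomputable def g (x y : ℝ) : ℝ := (x+y)/(2*Real.sqrt (x*y))

lemma g_comm (x y : ℝ) : g x y = g y x := by
  unfold g; rw [add_comm, mul_comm x y]

lemma AG_term_eq {x y : ℝ} (hx : 0 < x) (hy : 0 < y) :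
    (Real.sqrt (x / y) + Real.sqrt (y / x)) / 2 = g x y := by
  unfold g
  have hsx : 0 < Real.sqrt x := Real.sqrt_pos.mpr hx
  have hsy : 0 < Real.sqrt y := Real.sqrt_pos.mpr hy
  rw [Real.sqrt_div hx.le, Real.sqrt_div hy.le, Real.sqrt_mul hx.le]
  have hx2 : Real.sqrt x * Real.sqrt x = x := Real.mul_self_sqrt hx.le
  have hy2 : Real.sqrt y * Real.sqrt y = y := Real.mul_self_sqrt hy.le
  rw [div_add_div _ _ (ne_of_gt hsy) (ne_of_gt hsx)]
  rw [hx2, hy2]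
  rw [div_div]
  rw [mul_comm (Real.sqrt y) (Real.sqrt x)]
  ring_nf

lemma g_self {x : ℝ} (hx : 0 < x) : g x x = 1 := by
  unfold g
  rw [Real.sqrt_mul_self hx.le]
  field_simp
  ring

lemma g_one {y : ℝ} : g 1 y = (1+y)/(2*Real.sqrt y) := by unfold g; rw [one_mul]

lemma core_ineq {y D : ℝ} (h1 : 1 ≤ y) (h2 : y ≤ D) :
    (1+y)*Real.sqrt D ≤ (D+1)*Real.sqrt y := by
  have hs : Real.sqrt y ≤ Real.sqrt D := Real.sqrt_le_sqrt (by linarith)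
  have h1s : 1 ≤ Real.sqrt y := by
    rw [show (1:ℝ) = Real.sqrt 1 by simp]; exact Real.sqrt_le_sqrt h1
  have hy2 : Real.sqrt y * Real.sqrt y = y := Real.mul_self_sqrt (by linarith)
  have hD2 : Real.sqrt D * Real.sqrt D = D := Real.mul_self_sqrt (by linarith)
  nlinarith [mul_nonneg (sub_nonneg.mpr hs) (by nlinarith : (0:ℝ) ≤ Real.sqrt y * Real.sqrt D - 1)]

lemma core_strict {y D : ℝ} (h1 : 1 ≤ y) (h2 : y < D) (hD : 2 ≤ D) :
    (1+y)*Real.sqrt D < (D+1)*Real.sqrt y := by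
  have hs : Real.sqrt y < Real.sqrt D := Real.sqrt_lt_sqrt (by linarith) h2
  have h1s : 1 ≤ Real.sqrt y := by
    rw [show (1:ℝ) = Real.sqrt 1 by simp]; exact Real.sqrt_le_sqrt h1
  have hy2 : Real.sqrt y * Real.sqrt y = y := Real.mul_self_sqrt (by linarith)
  have hD2 : Real.sqrt D * Real.sqrt D = D := Real.mul_self_sqrt (by linarith)
  have hst : 1 < Real.sqrt y * Real.sqrt D := by nlinarith
  nlinarith [mul_pos (sub_pos.mpr hs) (sub_pos.mpr hst)]

lemma g_one_le {y D : ℝ} (h1 : 1 ≤ y) (h2 : y ≤ D) :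
    g 1 y ≤ (D+1)/(2*Real.sqrt D) := by
  rw [g_one]
  have hsy : 0 < Real.sqrt y := Real.sqrt_pos.mpr (by linarith)
  have hsD : 0 < Real.sqrt D := Real.sqrt_pos.mpr (by linarith)
  rw [div_le_div_iff₀ (by linarith) (by linarith)]
  nlinarith [core_ineq h1 h2]

lemma g_one_eq_iff {y D : ℝ} (h1 : 1 ≤ y) (h2 : y ≤ D) (hD : 2 ≤ D) :
    g 1 y = (D+1)/(2*Real.sqrt D) ↔ y = D := by
  constructor
  · intro h
    by_contra hne
    have hlt : y < D := lt_of_le_of_ne h2 hne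
    have := core_strict h1 hlt hD
    rw [g_one] at h
    have hsy : 0 < Real.sqrt y := Real.sqrt_pos.mpr (by linarith)
    have hsD : 0 < Real.sqrt D := Real.sqrt_pos.mpr (by linarith)
    rw [div_eq_div_iff (by linarith) (by linarith)] at h
    nlinarith
  · rintro rfl; rw [g_one, add_comm]

lemma g_le_Q {x y δ : ℝ} (hδ : 0 < δ) (hx : δ ≤ x) (hy : δ ≤ y) :
    g x y ≤ (x+y)/(2*δ) := by
  unfold g
  have hδxy : δ ≤ Real.sqrt (x*y) := by
    rw [show δ = Real.sqrt (δ^2) by rw [Real.sqrt_sq hδ.le]]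
    exact Real.sqrt_le_sqrt (by nlinarith)
  exact div_le_div_of_nonneg_left (by linarith) (by linarith) (by linarith)

lemma g_eq_Q_iff {x y δ : ℝ} (hδ : 0 < δ) (hx : δ ≤ x) (hy : δ ≤ y) :
    g x y = (x+y)/(2*δ) ↔ (x = δ ∧ y = δ) := by
  constructor
  · intro h
    unfold g at h
    have hxy : 0 < x + y := by linarith
    have hδxy : δ ≤ Real.sqrt (x*y) := by
      rw [show δ = Real.sqrt (δ^2) by rw [Real.sqrt_sq hδ.le]]
      exact Real.sqrt_le_sqrt (by nlinarith)
    have hs : Real.sqrt (x*y) = δ := by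
      have h2 : (x+y) * (2*δ) = (x+y) * (2*Real.sqrt (x*y)) := by
        rw [div_eq_div_iff (by linarith) (by linarith)] at h
        linarith
      have := mul_left_cancel₀ (ne_of_gt hxy) h2
      linarith
    have hxyδ : x * y = δ^2 := by
      have := Real.sq_sqrt (by nlinarith : (0:ℝ) ≤ x*y)
      rw [hs] at this; linarith
    constructor <;> nlinarith
  · rintro ⟨rfl, rfl⟩
    rw [g_self hδ]
    rw [eq_div_iff (by linarith)]
    ring

/-! ### Edge set machinery -/

variable {V : Type*} [Fintype V] (G : SimpleGraph V)

noncomputable def EF : Finset (V × V) :=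
  letI := Classical.decRel G.Adj
  Finset.univ.filter (fun q => G.Adj q.1 q.2)

lemma mem_EF {q : V × V} : q ∈ EF G ↔ G.Adj q.1 q.2 := by
  letI := Classical.decRel G.Adj
  simp [EF]

lemma edgeSum_eq (f : ℝ → ℝ → ℝ) :
    edgeSum G f = (1/2) * ∑ q ∈ EF G, f (deg G q.1) (deg G q.2) := by
  letI := Classical.decRel G.Adj
  unfold edgeSum EF
  rw [sum_filter, Fintype.sum_prod_type]

noncomputable def pend : Finset V :=
  Finset.univ.filter (fun v => ndeg G v = 1)

lemma card_EF (m : ℕ) (hm : G.edgeSet.ncard = m) : (EF G).card = 2 * m := by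
  letI := Classical.decRel G.Adj
  classical
  have h1 : (EF G).card = ∑ u : V, G.degree u := by
    unfold EF
    rw [Finset.card_filter, Fintype.sum_prod_type]
    refine Finset.sum_congr rfl fun u _ => ?_
    rw [← SimpleGraph.card_neighborFinset_eq_degree,
      SimpleGraph.neighborFinset_eq_filter, Finset.card_filter]
  rw [h1, SimpleGraph.sum_degrees_eq_twice_card_edges]
  congr 1
  rw [← hm, SimpleGraph.edgeFinset, Set.ncard_eq_toFinset_card']

noncomputable def P1 : Finset (V × V) := (EF G).filter (fun q => ndeg G q.1 = 1)
noncomputable def P2 : Finset (V × V) := (EF G).filter (fun q => ndeg G q.2 = 1)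
noncomputable def PF : Finset (V × V) := (EF G).filter (fun q => ndeg G q.1 = 1 ∨ ndeg G q.2 = 1)
noncomputable def QF : Finset (V × V) :=
  (EF G).filter (fun q => ¬(ndeg G q.1 = 1 ∨ ndeg G q.2 = 1))

lemma mem_PF {q : V × V} :
    q ∈ PF G ↔ G.Adj q.1 q.2 ∧ (ndeg G q.1 = 1 ∨ ndeg G q.2 = 1) := by
  rw [PF, Finset.mem_filter, mem_EF]

lemma mem_QF {q : V × V} :
    q ∈ QF G ↔ G.Adj q.1 q.2 ∧ ¬(ndeg G q.1 = 1 ∨ ndeg G q.2 = 1) := by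
  rw [QF, Finset.mem_filter, mem_EF]

lemma card_P1 (p : ℕ) (hp : {v : V | ndeg G v = 1}.ncard = p) : (P1 G).card = p := by
  letI := Classical.decRel G.Adj
  classical
  have h1 : (P1 G).card = ∑ u ∈ pend G, G.degree u := by
    unfold P1 EF pend
    rw [Finset.filter_filter, Finset.card_filter, Fintype.sum_prod_type, Finset.sum_filter]
    refine Finset.sum_congr rfl fun u _ => ?_
    by_cases h : ndeg G u = 1
    · simp only [h, if_true, and_true]
      rw [← SimpleGraph.card_neighborFinset_eq_degree,
        SimpleGraph.neighborFinset_eq_filter, Finset.card_filter]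
    · simp [h]
  have h2 : ∀ u ∈ pend G, G.degree u = 1 := by
    intro u hu
    simp only [pend, Finset.mem_filter] at hu
    exact hu.2
  rw [h1, Finset.sum_congr rfl h2, Finset.sum_const, smul_eq_mul, mul_one]
  rw [← hp]
  rw [Set.ncard_eq_toFinset_card', Set.toFinset_setOf]
  rfl

lemma card_P2_eq : (P2 G).card = (P1 G).card := by
  apply Finset.card_bij (fun q _ => Prod.swap q)
  · intro q hq
    rw [P2, Finset.mem_filter, mem_EF] at hq
    rw [P1, Finset.mem_filter, mem_EF]
    exact ⟨hq.1.symm, hq.2⟩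
  · intro a _ b _ hab
    exact Prod.swap_injective hab
  · intro q hq
    rw [P1, Finset.mem_filter, mem_EF] at hq
    refine ⟨Prod.swap q, ?_, by simp⟩
    rw [P2, Finset.mem_filter, mem_EF]
    exact ⟨hq.1.symm, hq.2⟩

lemma PF_eq_union : PF G = P1 G ∪ P2 G := by
  rw [PF, P1, P2, Finset.filter_or]

lemma card_PF (hno : ∀ {a b : V}, G.Adj a b → ndeg G a = 1 → ndeg G b = 1 → False)
    (p : ℕ) (hp : (P1 G).card = p) : (PF G).card = 2*p := by
  rw [PF_eq_union, Finset.card_union_of_disjoint, hp, card_P2_eq G, hp]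
  · ring
  · rw [Finset.disjoint_left]
    intro q hq1 hq2
    rw [P1, Finset.mem_filter, mem_EF] at hq1
    rw [P2, Finset.mem_filter, mem_EF] at hq2
    exact hno hq1.1 hq1.2 hq2.2

lemma card_split : (PF G).card + (QF G).card = (EF G).card := by
  rw [PF, QF]
  exact Finset.card_filter_add_card_filter_not _

noncomputable def phi (q : V × V) : ℝ :=
  (Real.sqrt (deg G q.1 / deg G q.2) + Real.sqrt (deg G q.2 / deg G q.1)) / 2
noncomputable def sig (q : V × V) : ℝ := deg G q.1 + deg G q.2

lemma AG_eq : AG G = (1/2) * (∑ q ∈ PF G, phi G q + ∑ q ∈ QF G, phi G q) := by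
  rw [AG, edgeSum_eq]
  congr 1
  rw [PF, QF]
  exact (Finset.sum_filter_add_sum_filter_not _ _ _).symm

lemma FM_eq : forgottenIndex G + 2 * M2 G
    = (1/2) * (∑ q ∈ PF G, sig G q ^ 2 + ∑ q ∈ QF G, sig G q ^ 2) := by
  rw [forgottenIndex, M2, edgeSum_eq, edgeSum_eq]
  have h2 : ∑ q ∈ PF G, sig G q ^ 2 + ∑ q ∈ QF G, sig G q ^ 2
      = ∑ q ∈ EF G, sig G q ^ 2 := by
    rw [PF, QF]
    exact Finset.sum_filter_add_sum_filter_not _ _ _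
  have h3 : ∑ q ∈ EF G, sig G q ^ 2
      = ∑ q ∈ EF G, ((deg G q.1)^2 + (deg G q.2)^2)
        + 2 * ∑ q ∈ EF G, (deg G q.1 * deg G q.2) := by
    rw [Finset.mul_sum, ← Finset.sum_add_distrib]
    exact Finset.sum_congr rfl fun q _ => by rw [sig]; ring
  rw [h2, h3]
  ring

/-! ### Graph-theoretic lemmas -/

lemma walk_closure {S : Set V} (hS : ∀ a ∈ S, ∀ b, G.Adj a b → b ∈ S) :
    ∀ {a b : V} (_ : G.Walk a b), a ∈ S → b ∈ S := by
  intro a b p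
  induction p with
  | nil => exact id
  | cons h q ih => exact fun ha => ih (hS _ ha _ h)

lemma ndeg_eq (v : V) : letI := Classical.decRel G.Adj; G.degree v = ndeg G v := rfl

lemma pendant_unique {u w b : V} (hu : ndeg G u = 1) (hw : G.Adj u w) (hb : G.Adj u b) :
    b = w := by
  letI := Classical.decRel G.Adj
  rw [← ndeg_eq] at hu
  obtain ⟨x, hx⟩ := Finset.card_eq_one.mp hu
  have h1 : w ∈ G.neighborFinset u := by simpa using hw
  have h2 : b ∈ G.neighborFinset u := by simpa using hb
  rw [hx, Finset.mem_singleton] at h1 h2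
  rw [h1, h2]

lemma exists_adj (hG : G.Connected) (hx : ∃ v, 2 ≤ ndeg G v) (u : V) :
    ∃ w, G.Adj u w := by
  letI := Classical.decRel G.Adj
  obtain ⟨v, hv⟩ := hx
  rw [← ndeg_eq] at hv
  by_cases h : u = v
  · subst h
    exact ((G.degree_pos_iff_exists_adj u).mp (by omega)).imp (fun _ h => h)
  · obtain ⟨p⟩ := hG.preconnected u v
    cases p with
    | nil => exact absurd rfl h
    | cons hadj q => exact ⟨_, hadj⟩

lemma one_le_ndeg (hG : G.Connected) (hx : ∃ v, 2 ≤ ndeg G v) (u : V) :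
    1 ≤ ndeg G u := by
  letI := Classical.decRel G.Adj
  rw [← ndeg_eq]
  exact (G.degree_pos_iff_exists_adj u).mpr (exists_adj G hG hx u)

lemma no_one_one (hG : G.Connected) (hx : ∃ v, 2 ≤ ndeg G v) {u w : V}
    (h : G.Adj u w) (hu : ndeg G u = 1) (hw : ndeg G w = 1) : False := by
  obtain ⟨v, hv⟩ := hx
  have hclosed : ∀ a ∈ ({u, w} : Set V), ∀ b, G.Adj a b → b ∈ ({u, w} : Set V) := by
    rintro a (rfl | rfl) b hb
    · right; exact pendant_unique G hu h hb
    · left; exact pendant_unique G hw h.symm hb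
  obtain ⟨q⟩ := hG.preconnected u v
  have := walk_closure G hclosed q (by left; rfl)
  rcases this with rfl | rfl
  · omega
  · omega

lemma star_semiregular (n Δ δ₁ : ℕ)
    (hn : Fintype.card V = n)
    (hΔ : IsGreatest (Set.range (ndeg G)) Δ)
    (hδ₁ : IsLeast {d : ℕ | ∃ v : V, ndeg G v = d ∧ 2 ≤ d} δ₁)
    (e : G ≃g completeBipartiteGraph (Fin 1) (Fin (n - 1))) :
    IsSemiregular G Δ 1 := by
  classical
  letI := Classical.decRel G.Adj
  obtain ⟨⟨v, hv, hv2⟩, -⟩ := hδ₁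
  have hvn : ndeg G v < n := by
    rw [← hn, ← ndeg_eq]
    exact G.degree_lt_card_verts v
  have hn3 : 3 ≤ n := by omega
  have hcard : ∀ u : V, ndeg G u
      = Fintype.card ((completeBipartiteGraph (Fin 1) (Fin (n-1))).neighborSet (e u)) := by
    intro u
    rw [← ndeg_eq, ← SimpleGraph.card_neighborSet_eq_degree]
    exact Fintype.card_congr (SimpleGraph.Iso.mapNeighborSet e u)
  have hinl : ∀ a : Fin 1,
      Fintype.card ((completeBipartiteGraph (Fin 1) (Fin (n-1))).neighborSet (Sum.inl a))
        = n - 1 := by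
    intro a
    have hset : (completeBipartiteGraph (Fin 1) (Fin (n-1))).neighborSet (Sum.inl a)
        = Set.range Sum.inr := by
      ext x; cases x <;> simp [SimpleGraph.neighborSet]
    rw [Fintype.card_congr (Equiv.setCongr hset)]
    rw [Set.card_range_of_injective Sum.inr_injective]
    simp
  have hinr : ∀ b : Fin (n-1),
      Fintype.card ((completeBipartiteGraph (Fin 1) (Fin (n-1))).neighborSet (Sum.inr b))
        = 1 := by
    intro b
    have hset : (completeBipartiteGraph (Fin 1) (Fin (n-1))).neighborSet (Sum.inr b)
        = Set.range Sum.inl := by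
      ext x; cases x <;> simp [SimpleGraph.neighborSet]
    rw [Fintype.card_congr (Equiv.setCongr hset)]
    rw [Set.card_range_of_injective Sum.inl_injective]
    simp
  set c := e.symm (Sum.inl 0) with hc
  have hec : e c = Sum.inl 0 := by
    rw [hc]; exact e.apply_symm_apply _
  have hdc : ndeg G c = n - 1 := by rw [hcard, hec, hinl]
  have hother : ∀ u : V, u ≠ c → ndeg G u = 1 := by
    intro u hu
    rcases h : e u with a | b
    · exfalso
      apply hu
      apply e.injective
      rw [h, hec, Subsingleton.elim a 0]
    · rw [hcard, h, hinr]
  have hΔ2 : 2 ≤ Δ := le_trans hv2 (hv ▸ hΔ.2 ⟨v, rfl⟩)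
  have hΔn : Δ = n - 1 := by
    obtain ⟨u, hu⟩ := hΔ.1
    by_cases h : u = c
    · rw [← hu, h, hdc]
    · rw [hother u h] at hu; omega
  refine ⟨{c}, {c}ᶜ, ⟨c, rfl⟩, ?_, disjoint_compl_right, Set.union_compl_self _, ?_, ?_⟩
  · obtain ⟨w, hw⟩ := Fintype.exists_ne_of_one_lt_card (by omega) c
    exact ⟨w, hw⟩
  · rintro x rfl; rw [hdc, hΔn]
  · intro x hx; exact hother x hx

end AGaux

set_option maxHeartbeats 2000000 in
/-- Theorem 1 of the paper: upper bound on `AG` and characterization of equality. -/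
theorem stmt0 {V : Type*} [Fintype V] (G : SimpleGraph V) (hG : G.Connected)
    (n m p Δ δ₁ : ℕ)
    (hn : Fintype.card V = n) (hm : G.edgeSet.ncard = m)
    (hp : {v : V | ndeg G v = 1}.ncard = p)
    (hΔ : IsGreatest (Set.range (ndeg G)) Δ)
    (hδ₁ : IsLeast {d : ℕ | ∃ v : V, ndeg G v = d ∧ 2 ≤ d} δ₁) :
    AG G ≤ (p : ℝ) * ((Δ : ℝ) + 1) / (2 * Real.sqrt Δ) +
      (1 / (2 * (δ₁ : ℝ))) *
        Real.sqrt (((m : ℝ) - p) *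
          (forgottenIndex G + 2 * M2 G - p * ((δ₁ : ℝ) + 1) ^ 2)) ∧
    (AG G = (p : ℝ) * ((Δ : ℝ) + 1) / (2 * Real.sqrt Δ) +
      (1 / (2 * (δ₁ : ℝ))) *
        Real.sqrt (((m : ℝ) - p) *
          (forgottenIndex G + 2 * M2 G - p * ((δ₁ : ℝ) + 1) ^ 2)) ↔
      Nonempty (G ≃g completeBipartiteGraph (Fin 1) (Fin (n - 1))) ∨
      (∃ r, ∀ v : V, ndeg G v = r) ∨ IsSemiregular G Δ 1) := by
  classical
  obtain ⟨⟨v₀, hv₀, hδ2⟩, hδmin⟩ := hδ₁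
  have hx : ∃ v, 2 ≤ ndeg G v := ⟨v₀, by omega⟩
  have hΔub : ∀ u, ndeg G u ≤ Δ := fun u => hΔ.2 ⟨u, rfl⟩
  have hΔδ : δ₁ ≤ Δ := hv₀ ▸ hΔub v₀
  have hΔ2 : 2 ≤ Δ := by omega
  have hδle : ∀ u, 2 ≤ ndeg G u → δ₁ ≤ ndeg G u := fun u h => hδmin ⟨u, rfl, h⟩
  have hd1 : ∀ u, 1 ≤ ndeg G u := AGaux.one_le_ndeg G hG hx
  have hno11 : ∀ {a b : V}, G.Adj a b → ndeg G a = 1 → ndeg G b = 1 → False :=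
    fun h h1 h2 => AGaux.no_one_one G hG hx h h1 h2
  have hnbr : ∀ {a b : V}, G.Adj a b → ndeg G a = 1 → δ₁ ≤ ndeg G b := by
    intro a b h ha
    refine hδle b ?_
    rcases Nat.lt_or_ge (ndeg G b) 2 with h2 | h2
    · have hb1 : ndeg G b = 1 := by have := hd1 b; omega
      exact (hno11 h ha hb1).elim
    · exact h2
  -- real facts
  have hdpos : ∀ u, (0:ℝ) < deg G u := fun u => by
    rw [deg]; exact_mod_cast Nat.lt_of_lt_of_le Nat.zero_lt_one (hd1 u)
  have hdeg1 : ∀ u, (1:ℝ) ≤ deg G u := fun u => by rw [deg]; exact_mod_cast hd1 u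
  have hdegΔ : ∀ u, deg G u ≤ (Δ:ℝ) := fun u => by rw [deg]; exact_mod_cast hΔub u
  have hδR : (2:ℝ) ≤ (δ₁:ℝ) := by exact_mod_cast hδ2
  have hΔR : (2:ℝ) ≤ (Δ:ℝ) := by exact_mod_cast hΔ2
  have hδpos : (0:ℝ) < (δ₁:ℝ) := by linarith
  -- cards
  have hP1card : (AGaux.P1 G).card = p := AGaux.card_P1 G p hp
  have hPFcard : (AGaux.PF G).card = 2*p :=
    AGaux.card_PF G (fun h h1 h2 => hno11 h h1 h2) p hP1card
  have hEFcard : (AGaux.EF G).card = 2*m := AGaux.card_EF G m hm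
  have hsplit : (AGaux.PF G).card + (AGaux.QF G).card = (AGaux.EF G).card := AGaux.card_split G
  have hQFcardR : ((AGaux.QF G).card : ℝ) = 2*(m:ℝ) - 2*(p:ℝ) := by
    have h1 : 2*p + (AGaux.QF G).card = 2*m := by rw [← hPFcard, hsplit, hEFcard]
    have h2 := congrArg (Nat.cast : ℕ → ℝ) h1
    push_cast at h2
    linarith
  have hmp0 : (0:ℝ) ≤ (m:ℝ) - (p:ℝ) := by
    have : (0:ℝ) ≤ ((AGaux.QF G).card : ℝ) := Nat.cast_nonneg _
    linarith [hQFcardR]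
  -- per-edge facts
  have hPfact : ∀ q ∈ AGaux.PF G,
      (deg G q.1 = 1 ∧ (δ₁:ℝ) ≤ deg G q.2) ∨ (deg G q.2 = 1 ∧ (δ₁:ℝ) ≤ deg G q.1) := by
    intro q hq
    rw [AGaux.mem_PF] at hq
    obtain ⟨hadj, h1 | h1⟩ := hq
    · left
      exact ⟨by rw [deg, h1]; norm_num, by rw [deg]; exact_mod_cast hnbr hadj h1⟩
    · right
      exact ⟨by rw [deg, h1]; norm_num, by rw [deg]; exact_mod_cast hnbr hadj.symm h1⟩
  have hQfact : ∀ q ∈ AGaux.QF G, (δ₁:ℝ) ≤ deg G q.1 ∧ (δ₁:ℝ) ≤ deg G q.2 := by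
    intro q hq
    rw [AGaux.mem_QF] at hq
    obtain ⟨hadj, hnor⟩ := hq
    push_neg at hnor
    have h1 : 2 ≤ ndeg G q.1 := by have := hd1 q.1; have := hnor.1; omega
    have h2 : 2 ≤ ndeg G q.2 := by have := hd1 q.2; have := hnor.2; omega
    constructor
    · rw [deg]; exact_mod_cast hδle _ h1
    · rw [deg]; exact_mod_cast hδle _ h2
  have hphiab : ∀ a b : V, AGaux.phi G (a,b) = AGaux.g (deg G a) (deg G b) :=
    fun a b => AGaux.AG_term_eq (hdpos a) (hdpos b)
  have hphig : ∀ q : V × V, AGaux.phi G q = AGaux.g (deg G q.1) (deg G q.2) :=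
    fun q => hphiab q.1 q.2
  have hsigab : ∀ a b : V, AGaux.sig G (a,b) = deg G a + deg G b := fun _ _ => rfl
  -- abbreviations
  set X : ℝ := forgottenIndex G + 2 * M2 G - (p:ℝ) * ((δ₁:ℝ) + 1) ^ 2 with hXdef
  set RHS2 : ℝ := (1 / (2 * (δ₁:ℝ))) * Real.sqrt (((m:ℝ) - (p:ℝ)) * X) with hRHS2def
  set cΔ : ℝ := ((Δ:ℝ)+1)/(2*Real.sqrt (Δ:ℝ)) with hcΔ
  set Sp := ∑ q ∈ AGaux.PF G, AGaux.phi G q with hSpdef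
  set Sq := ∑ q ∈ AGaux.QF G, AGaux.phi G q with hSqdef
  set SS1 := ∑ q ∈ AGaux.QF G, AGaux.sig G q with hSS1def
  set SS2 := ∑ q ∈ AGaux.QF G, AGaux.sig G q ^ 2 with hSS2def
  set SS2P := ∑ q ∈ AGaux.PF G, AGaux.sig G q ^ 2 with hSS2Pdef
  clear_value X RHS2 cΔ Sp Sq SS1 SS2 SS2P
  have hAGexp : AG G = (1/2)*Sp + (1/2)*Sq := by
    rw [AGaux.AG_eq G, ← hSpdef, ← hSqdef]; ring
  -- per-term bounds
  have hPle : ∀ q ∈ AGaux.PF G, AGaux.phi G q ≤ cΔ := by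
    intro q hq
    rw [hphig, hcΔ]
    rcases hPfact q hq with ⟨h1, _⟩ | ⟨h1, _⟩
    · rw [h1]
      exact AGaux.g_one_le (hdeg1 _) (hdegΔ _)
    · rw [h1, AGaux.g_comm]
      exact AGaux.g_one_le (hdeg1 _) (hdegΔ _)
  have hQle : ∀ q ∈ AGaux.QF G, AGaux.phi G q ≤ AGaux.sig G q / (2*(δ₁:ℝ)) := by
    intro q hq
    rw [hphig, AGaux.sig]
    exact AGaux.g_le_Q hδpos (hQfact q hq).1 (hQfact q hq).2
  have hPconst : ∑ _q ∈ AGaux.PF G, cΔ = (2*(p:ℝ)) * cΔ := by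
    rw [Finset.sum_const, nsmul_eq_mul, hPFcard]; push_cast; ring
  have hSp_le : Sp ≤ (2*(p:ℝ)) * cΔ := by
    rw [hSpdef, ← hPconst]
    exact Finset.sum_le_sum hPle
  have hSq_le1 : Sq ≤ SS1 / (2*(δ₁:ℝ)) := by
    rw [hSqdef, hSS1def, Finset.sum_div]
    exact Finset.sum_le_sum hQle
  have hSS1nn : (0:ℝ) ≤ SS1 := by
    rw [hSS1def]
    refine Finset.sum_nonneg fun q _ => ?_
    rw [AGaux.sig]
    linarith [hdpos q.1, hdpos q.2]
  have hSS2nn : (0:ℝ) ≤ SS2 := by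
    rw [hSS2def]; exact Finset.sum_nonneg fun q _ => sq_nonneg _
  have hcardnn : (0:ℝ) ≤ ((AGaux.QF G).card : ℝ) := Nat.cast_nonneg _
  have hSS1_le : SS1 ≤ Real.sqrt (((AGaux.QF G).card : ℝ) * SS2) := by
    rw [Real.le_sqrt hSS1nn (by positivity)]
    have hcs := Finset.sum_mul_sq_le_sq_mul_sq (AGaux.QF G) (fun _ => (1:ℝ)) (AGaux.sig G)
    rw [hSS1def, hSS2def]
    simpa using hcs
  have hSS2P_termle : ∀ q ∈ AGaux.PF G, ((δ₁:ℝ)+1)^2 ≤ AGaux.sig G q ^ 2 := by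
    intro q hq
    have hs : (δ₁:ℝ)+1 ≤ AGaux.sig G q := by
      rw [AGaux.sig]
      rcases hPfact q hq with ⟨h1, h2⟩ | ⟨h1, h2⟩ <;> rw [h1] <;> linarith
    exact pow_le_pow_left₀ (by positivity) hs 2
  have hPconst2 : ∑ _q ∈ AGaux.PF G, ((δ₁:ℝ)+1)^2 = (2*(p:ℝ)) * ((δ₁:ℝ)+1)^2 := by
    rw [Finset.sum_const, nsmul_eq_mul, hPFcard]; push_cast; ring
  have hSS2P_ge : (2*(p:ℝ)) * ((δ₁:ℝ)+1)^2 ≤ SS2P := by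
    rw [hSS2Pdef, ← hPconst2]
    exact Finset.sum_le_sum hSS2P_termle
  have hFM : forgottenIndex G + 2*M2 G = (1/2)*(SS2P + SS2) := by
    rw [hSS2Pdef, hSS2def]; exact AGaux.FM_eq G
  have hSS2_le : SS2 ≤ 2*X := by
    rw [hXdef]; linarith [hFM, hSS2P_ge]
  have hXnn : (0:ℝ) ≤ 2*X := le_trans hSS2nn hSS2_le
  have hsqrt4 : Real.sqrt (((AGaux.QF G).card:ℝ) * (2*X))
      = 2*Real.sqrt (((m:ℝ)-(p:ℝ))*X) := by
    rw [hQFcardR]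
    rw [show (2*(m:ℝ)-2*(p:ℝ))*(2*X) = (2:ℝ)^2*(((m:ℝ)-(p:ℝ))*X) by ring]
    rw [Real.sqrt_mul (by positivity), Real.sqrt_sq (by norm_num)]
  have hb12 : SS1 / (2*(δ₁:ℝ)) ≤ Real.sqrt (((AGaux.QF G).card:ℝ) * SS2) / (2*(δ₁:ℝ)) := by
    gcongr
  have hb23 : Real.sqrt (((AGaux.QF G).card:ℝ) * SS2) / (2*(δ₁:ℝ))
      ≤ Real.sqrt (((AGaux.QF G).card:ℝ) * (2*X)) / (2*(δ₁:ℝ)) := by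
    gcongr
  have hb3 : Real.sqrt (((AGaux.QF G).card:ℝ) * (2*X)) / (2*(δ₁:ℝ)) = 2*RHS2 := by
    rw [hsqrt4, hRHS2def]; ring
  have hc1 : (1/2)*Sp ≤ (p:ℝ)*cΔ := by linarith
  have hc2 : (1/2)*Sq ≤ RHS2 := by
    have h := le_trans hSq_le1 (le_trans hb12 hb23)
    rw [hb3] at h
    linarith
  have hgΔ : AGaux.g 1 (Δ:ℝ) = cΔ := by rw [AGaux.g_one, hcΔ, add_comm]
  -- The structural condition C
  have hCtoEq : (∀ a b, G.Adj a b → ndeg G a = 1 → ndeg G b = Δ) →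
      (∀ a b, G.Adj a b → ndeg G a ≠ 1 → ndeg G b ≠ 1 → ndeg G a = δ₁) →
      ((AGaux.QF G).Nonempty → ∀ a b, G.Adj a b → ndeg G a = 1 → ndeg G b = δ₁) →
      AG G = (p:ℝ) * ((Δ:ℝ) + 1) / (2 * Real.sqrt (Δ:ℝ)) + RHS2 := by
    intro c1 c2 c3
    have hSp_eq : Sp = 2*(p:ℝ)*cΔ := by
      rw [hSpdef]
      rw [show (2*(p:ℝ)*cΔ) = (2*(p:ℝ))*cΔ by ring, ← hPconst]
      refine Finset.sum_congr rfl fun q hq => ?_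
      obtain ⟨hadj, hor⟩ := (AGaux.mem_PF G).mp hq
      rcases hor with h1 | h1
      · have hb := c1 q.1 q.2 hadj h1
        rw [hphig, show deg G q.1 = 1 by rw [deg, h1]; norm_num,
          show deg G q.2 = (Δ:ℝ) by rw [deg, hb], hgΔ]
      · have hb := c1 q.2 q.1 hadj.symm h1
        rw [hphig, show deg G q.2 = 1 by rw [deg, h1]; norm_num,
          show deg G q.1 = (Δ:ℝ) by rw [deg, hb], AGaux.g_comm, hgΔ]
    by_cases hQne : (AGaux.QF G).Nonempty
    · have hQboth : ∀ q ∈ AGaux.QF G, deg G q.1 = (δ₁:ℝ) ∧ deg G q.2 = (δ₁:ℝ) := by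
        intro q hq
        obtain ⟨hadj, hnor⟩ := (AGaux.mem_QF G).mp hq
        push_neg at hnor
        constructor
        · rw [deg, c2 q.1 q.2 hadj hnor.1 hnor.2]
        · rw [deg, c2 q.2 q.1 hadj.symm hnor.2 hnor.1]
      have hSq_eq : Sq = 2*((m:ℝ)-(p:ℝ)) := by
        rw [hSqdef]
        have hone : ∀ q ∈ AGaux.QF G, AGaux.phi G q = 1 := by
          intro q hq
          rw [hphig, (hQboth q hq).1, (hQboth q hq).2, AGaux.g_self hδpos]
        rw [Finset.sum_congr rfl hone, Finset.sum_const, nsmul_eq_mul, mul_one, hQFcardR]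
        try ring
      have hSS2P_eq : SS2P = 2*(p:ℝ)*((δ₁:ℝ)+1)^2 := by
        rw [hSS2Pdef]
        have hterm : ∀ q ∈ AGaux.PF G, AGaux.sig G q ^ 2 = ((δ₁:ℝ)+1)^2 := by
          intro q hq
          obtain ⟨hadj, hor⟩ := (AGaux.mem_PF G).mp hq
          rcases hor with h1 | h1
          · have hb := c3 hQne q.1 q.2 hadj h1
            rw [AGaux.sig, show deg G q.1 = 1 by rw [deg, h1]; norm_num,
              show deg G q.2 = (δ₁:ℝ) by rw [deg, hb]]
            try ring
          · have hb := c3 hQne q.2 q.1 hadj.symm h1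
            rw [AGaux.sig, show deg G q.2 = 1 by rw [deg, h1]; norm_num,
              show deg G q.1 = (δ₁:ℝ) by rw [deg, hb]]
            try ring
        rw [Finset.sum_congr rfl hterm, hPconst2]
        try ring
      have hSS2_eq : SS2 = (2*((m:ℝ)-(p:ℝ)))*(2*(δ₁:ℝ))^2 := by
        rw [hSS2def]
        have hterm : ∀ q ∈ AGaux.QF G, AGaux.sig G q ^ 2 = (2*(δ₁:ℝ))^2 := by
          intro q hq
          rw [AGaux.sig, (hQboth q hq).1, (hQboth q hq).2]
          ring
        rw [Finset.sum_congr rfl hterm, Finset.sum_const, nsmul_eq_mul, hQFcardR]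
        try ring
      have hXeq : X = ((m:ℝ)-(p:ℝ))*(4*(δ₁:ℝ)^2) := by
        have hsq : (2*(δ₁:ℝ))^2 = 4*(δ₁:ℝ)^2 := by ring
        rw [hXdef]
        rw [hSS2_eq, hsq, hSS2P_eq] at hFM
        rw [hFM]
        ring
      have hsqX : Real.sqrt (((m:ℝ)-(p:ℝ))*X) = 2*(δ₁:ℝ)*((m:ℝ)-(p:ℝ)) := by
        rw [hXeq, show ((m:ℝ)-(p:ℝ))*(((m:ℝ)-(p:ℝ))*(4*(δ₁:ℝ)^2))
          = (2*(δ₁:ℝ)*((m:ℝ)-(p:ℝ)))^2 by ring]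
        exact Real.sqrt_sq (mul_nonneg (by positivity) hmp0)
      rw [hAGexp, hSp_eq, hSq_eq, hRHS2def, hsqX, hcΔ]
      field_simp
    · have hQF0 : (AGaux.QF G).card = 0 := by
        rw [Finset.card_eq_zero]
        exact Finset.not_nonempty_iff_eq_empty.mp hQne
      have hmpeq : (m:ℝ) - (p:ℝ) = 0 := by
        rw [hQF0] at hQFcardR
        push_cast at hQFcardR
        linarith
      have hSq0 : Sq = 0 := by
        rw [hSqdef, Finset.not_nonempty_iff_eq_empty.mp hQne, Finset.sum_empty]
      rw [hAGexp, hSp_eq, hSq0, hRHS2def, hmpeq, zero_mul, Real.sqrt_zero, mul_zero,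
        add_zero, hcΔ]
      ring
  have hCtoD : (∀ a b, G.Adj a b → ndeg G a = 1 → ndeg G b = Δ) →
      (∀ a b, G.Adj a b → ndeg G a ≠ 1 → ndeg G b ≠ 1 → ndeg G a = δ₁) →
      ((AGaux.QF G).Nonempty → ∀ a b, G.Adj a b → ndeg G a = 1 → ndeg G b = δ₁) →
      (Nonempty (G ≃g completeBipartiteGraph (Fin 1) (Fin (n - 1))) ∨
        (∃ r, ∀ v : V, ndeg G v = r) ∨ IsSemiregular G Δ 1) := by
    intro c1 c2 c3
    by_cases hp0 : p = 0
    · right; left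
      have hpe : {v : V | ndeg G v = 1} = ∅ := by
        refine (Set.ncard_eq_zero (Set.toFinite _)).mp ?_
        rw [hp, hp0]
      have hne1 : ∀ v, ndeg G v ≠ 1 := by
        intro v hv
        have hvmem : v ∈ ({v : V | ndeg G v = 1} : Set V) := hv
        rw [hpe] at hvmem
        exact hvmem
      refine ⟨δ₁, fun v => ?_⟩
      obtain ⟨w, hw⟩ := AGaux.exists_adj G hG hx v
      exact c2 v w hw (hne1 v) (hne1 w)
    · obtain ⟨u, hu1⟩ : {v : V | ndeg G v = 1}.Nonempty :=
        Set.nonempty_of_ncard_ne_zero (by rw [hp]; exact hp0)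
      obtain ⟨w, hw⟩ := AGaux.exists_adj G hG hx u
      have hu1' : ndeg G u = 1 := hu1
      have hwΔ : ndeg G w = Δ := c1 u w hw hu1'
      right; right
      refine ⟨{x | ndeg G x = Δ}, {x | ndeg G x = 1}, ⟨w, hwΔ⟩, ⟨u, hu1'⟩, ?_, ?_,
        fun v hv => hv, fun v hv => hv⟩
      · rw [Set.disjoint_left]
        intro x h1 h2
        simp only [Set.mem_setOf_eq] at h1 h2
        omega
      · rw [Set.eq_univ_iff_forall]
        intro x
        by_cases hx1 : ndeg G x = 1
        · right; exact hx1
        · left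
          obtain ⟨y, hy⟩ := AGaux.exists_adj G hG hx x
          by_cases hy1 : ndeg G y = 1
          · exact c1 y x hy.symm hy1
          · have hqne : (AGaux.QF G).Nonempty :=
              ⟨(x,y), (AGaux.mem_QF G).mpr ⟨hy, not_or.mpr ⟨hx1, hy1⟩⟩⟩
            have hwδ : ndeg G w = δ₁ := c3 hqne u w hw hu1'
            have hxδ : ndeg G x = δ₁ := c2 x y hy hx1 hy1
            show ndeg G x = Δ
            omega
  have hsemiToC : IsSemiregular G Δ 1 →
      ((∀ a b, G.Adj a b → ndeg G a = 1 → ndeg G b = Δ) ∧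
       (∀ a b, G.Adj a b → ndeg G a ≠ 1 → ndeg G b ≠ 1 → ndeg G a = δ₁) ∧
       ((AGaux.QF G).Nonempty → ∀ a b, G.Adj a b → ndeg G a = 1 → ndeg G b = δ₁)) := by
    rintro ⟨V₁, V₂, h1ne, h2ne, hdisj, huniv, hdV₁, hdV₂⟩
    have hclass : ∀ x, ndeg G x = Δ ∨ ndeg G x = 1 := by
      intro x
      have hmem : x ∈ V₁ ∪ V₂ := huniv ▸ Set.mem_univ x
      rcases hmem with h | h
      · left; exact hdV₁ x h
      · right; exact hdV₂ x h
    have hδΔ : δ₁ = Δ := by rcases hclass v₀ with h | h <;> omega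
    refine ⟨?_, ?_, ?_⟩
    · intro a b hab ha
      rcases hclass b with h | h
      · exact h
      · exact (hno11 hab ha h).elim
    · intro a b hab ha _
      rcases hclass a with h | h
      · omega
      · exact (ha h).elim
    · intro _ a b hab ha
      rcases hclass b with h | h
      · omega
      · exact (hno11 hab ha h).elim
  have hDtoC : (Nonempty (G ≃g completeBipartiteGraph (Fin 1) (Fin (n - 1))) ∨
      (∃ r, ∀ v : V, ndeg G v = r) ∨ IsSemiregular G Δ 1) →
      ((∀ a b, G.Adj a b → ndeg G a = 1 → ndeg G b = Δ) ∧
       (∀ a b, G.Adj a b → ndeg G a ≠ 1 → ndeg G b ≠ 1 → ndeg G a = δ₁) ∧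
       ((AGaux.QF G).Nonempty → ∀ a b, G.Adj a b → ndeg G a = 1 → ndeg G b = δ₁)) := by
    rintro (he | ⟨r, hr⟩ | hsemi)
    · obtain ⟨e⟩ := he
      exact hsemiToC (AGaux.star_semiregular G n Δ δ₁ hn hΔ ⟨⟨v₀, hv₀, hδ2⟩, hδmin⟩ e)
    · have hrδ : r = δ₁ := by have := hr v₀; omega
      refine ⟨?_, ?_, ?_⟩
      · intro a b hab ha
        have := hr a; omega
      · intro a b hab ha hb
        have := hr a; omega
      · intro _ a b hab ha
        have := hr a; omega
    · exact hsemiToC hsemi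
  constructor
  · calc AG G = (1/2)*Sp + (1/2)*Sq := hAGexp
      _ ≤ (p:ℝ)*cΔ + RHS2 := by linarith
      _ = (p:ℝ) * ((Δ:ℝ) + 1) / (2 * Real.sqrt (Δ:ℝ)) + RHS2 := by rw [hcΔ]; ring
  · constructor
    · intro heq
      have hRHS1' : (p:ℝ) * ((Δ:ℝ) + 1) / (2 * Real.sqrt (Δ:ℝ)) = (p:ℝ)*cΔ := by
        rw [hcΔ]; ring
      rw [hAGexp, hRHS1'] at heq
      have e1 : (1/2)*Sp = (p:ℝ)*cΔ := by linarith
      have e2 : (1/2)*Sq = RHS2 := by linarith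
      have hSpsum : ∑ q ∈ AGaux.PF G, AGaux.phi G q = ∑ _q ∈ AGaux.PF G, cΔ := by
        rw [hPconst, ← hSpdef]
        linarith
      have hPeach : ∀ q ∈ AGaux.PF G, AGaux.phi G q = cΔ :=
        (Finset.sum_eq_sum_iff_of_le hPle).mp hSpsum
      have hC1 : ∀ a b, G.Adj a b → ndeg G a = 1 → ndeg G b = Δ := by
        intro a b hab ha
        have hqmem : (a,b) ∈ AGaux.PF G := (AGaux.mem_PF G).mpr ⟨hab, Or.inl ha⟩
        have hval := hPeach _ hqmem
        rw [hphiab, show deg G a = 1 by rw [deg, ha]; norm_num, hcΔ] at hval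
        have hbΔ := (AGaux.g_one_eq_iff (hdeg1 b) (hdegΔ b) hΔR).mp hval
        rw [deg] at hbΔ
        exact_mod_cast hbΔ
      have hSq_b3 : Sq = Real.sqrt (((AGaux.QF G).card:ℝ) * (2*X)) / (2*(δ₁:ℝ)) := by
        rw [hb3]; linarith
      have hSq_b1 : Sq = SS1 / (2*(δ₁:ℝ)) := by
        refine le_antisymm hSq_le1 ?_
        rw [hSq_b3]
        linarith
      have hQsum : ∑ q ∈ AGaux.QF G, AGaux.phi G q
          = ∑ q ∈ AGaux.QF G, AGaux.sig G q / (2*(δ₁:ℝ)) := by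
        rw [← Finset.sum_div, ← hSS1def, ← hSqdef]
        exact hSq_b1
      have hQeach : ∀ q ∈ AGaux.QF G, AGaux.phi G q = AGaux.sig G q / (2*(δ₁:ℝ)) :=
        (Finset.sum_eq_sum_iff_of_le hQle).mp hQsum
      have hC2 : ∀ a b, G.Adj a b → ndeg G a ≠ 1 → ndeg G b ≠ 1 → ndeg G a = δ₁ := by
        intro a b hab ha hb
        have hqmem : (a,b) ∈ AGaux.QF G := (AGaux.mem_QF G).mpr ⟨hab, not_or.mpr ⟨ha, hb⟩⟩
        have hval := hQeach _ hqmem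
        rw [hphiab, hsigab] at hval
        have hf := hQfact _ hqmem
        have haδ := ((AGaux.g_eq_Q_iff hδpos hf.1 hf.2).mp hval).1
        rw [deg] at haδ
        exact_mod_cast haδ
      have hC3 : (AGaux.QF G).Nonempty → ∀ a b, G.Adj a b → ndeg G a = 1 → ndeg G b = δ₁ := by
        intro hQne a b hab ha
        have hb2eq : Real.sqrt (((AGaux.QF G).card:ℝ) * SS2) / (2*(δ₁:ℝ))
            = Real.sqrt (((AGaux.QF G).card:ℝ) * (2*X)) / (2*(δ₁:ℝ)) := by
          refine le_antisymm hb23 ?_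
          rw [← hSq_b3, hSq_b1]
          exact hb12
        have hs : Real.sqrt (((AGaux.QF G).card:ℝ) * SS2)
            = Real.sqrt (((AGaux.QF G).card:ℝ) * (2*X)) := by
          have h2δ : (2*(δ₁:ℝ)) ≠ 0 := by positivity
          calc Real.sqrt (((AGaux.QF G).card:ℝ) * SS2)
              = Real.sqrt (((AGaux.QF G).card:ℝ) * SS2) / (2*(δ₁:ℝ)) * (2*(δ₁:ℝ)) :=
                (div_mul_cancel₀ _ h2δ).symm
            _ = Real.sqrt (((AGaux.QF G).card:ℝ) * (2*X)) / (2*(δ₁:ℝ)) * (2*(δ₁:ℝ)) := by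
                rw [hb2eq]
            _ = Real.sqrt (((AGaux.QF G).card:ℝ) * (2*X)) := div_mul_cancel₀ _ h2δ
        have hprod : ((AGaux.QF G).card:ℝ) * SS2 = ((AGaux.QF G).card:ℝ) * (2*X) :=
          (Real.sqrt_inj (by positivity) (by positivity)).mp hs
        have hcne : ((AGaux.QF G).card:ℝ) ≠ 0 := by
          have hpos := Finset.card_pos.mpr hQne
          positivity
        have hSS2X : SS2 = 2*X := mul_left_cancel₀ hcne hprod
        have hSS2Peq : SS2P = 2*(p:ℝ)*((δ₁:ℝ)+1)^2 := by
          rw [hXdef] at hSS2X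
          linarith [hFM]
        have hPsum2 : ∑ _q ∈ AGaux.PF G, ((δ₁:ℝ)+1)^2
            = ∑ q ∈ AGaux.PF G, AGaux.sig G q ^ 2 := by
          rw [hPconst2, ← hSS2Pdef, hSS2Peq]
          try ring
        have hPeach2 : ∀ q ∈ AGaux.PF G, ((δ₁:ℝ)+1)^2 = AGaux.sig G q ^ 2 :=
          (Finset.sum_eq_sum_iff_of_le hSS2P_termle).mp hPsum2
        have hqmem : (a,b) ∈ AGaux.PF G := (AGaux.mem_PF G).mpr ⟨hab, Or.inl ha⟩
        have hval := hPeach2 _ hqmem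
        rw [hsigab, show deg G a = 1 by rw [deg, ha]; norm_num] at hval
        have hfac : (deg G b - (δ₁:ℝ)) * (deg G b + (δ₁:ℝ) + 2) = 0 := by
          linear_combination -hval
        rcases mul_eq_zero.mp hfac with h | h
        · have hbδ : deg G b = (δ₁:ℝ) := by linarith
          rw [deg] at hbδ
          exact_mod_cast hbδ
        · exfalso
          have := hdpos b
          linarith
      exact hCtoD hC1 hC2 hC3
    · intro hd
      obtain ⟨c1, c2, c3⟩ := hDtoC hd
      exact hCtoEq c1 c2 c3
end

section
/- Let G be a finite simple connected graph of order n, size m and minimum degree δ. Then AG(G) ≤ (1/(2δ))·√(m·(F(G) + 2M₂(G))), with equality if and only if G is regular. -/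
open SimpleGraph

section helpers
open Finset
variable {V : Type*} [Fintype V] (G : SimpleGraph V)

noncomputable def PF : Finset (V × V) :=
  letI := Classical.decRel G.Adj
  Finset.univ.filter fun p => G.Adj p.1 p.2

lemma mem_PF {p : V × V} : p ∈ PF G ↔ G.Adj p.1 p.2 := by
  letI := Classical.decRel G.Adj
  simp [PF]

lemma edgeSum_eq (f : ℝ → ℝ → ℝ) :
    edgeSum G f = (1/2) * ∑ p ∈ PF G, f (deg G p.1) (deg G p.2) := by
  letI := Classical.decRel G.Adj
  unfold edgeSum PF
  congr 1
  rw [Finset.sum_filter]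
  exact (Fintype.sum_prod_type (fun a : V × V => if G.Adj a.1 a.2 then f (deg G a.1) (deg G a.2) else 0)).symm

lemma ndeg_eq (v : V) [inst : Fintype (G.neighborSet v)] : ndeg G v = G.degree v := by
  unfold ndeg
  congr!

lemma card_PF : (PF G).card = 2 * G.edgeSet.ncard := by
  letI := Classical.decRel G.Adj
  have h1 : (PF G).card = ∑ v, G.degree v := by
    unfold PF
    rw [Finset.card_filter, Fintype.sum_prod_type]
    congr 1; ext u
    rw [← SimpleGraph.card_neighborFinset_eq_degree, neighborFinset_eq_filter,
      Finset.card_filter]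
  rw [h1, SimpleGraph.sum_degrees_eq_twice_card_edges, ← SimpleGraph.coe_edgeFinset,
    Set.ncard_coe_finset]

lemma ndeg_pos_of_adj {u w : V} (h : G.Adj u w) : 0 < ndeg G u := by
  letI := Classical.decRel G.Adj
  rw [ndeg_eq]
  exact (G.degree_pos_iff_exists_adj u).2 ⟨w, h⟩

end helpers

/-- Corollary 1 of the paper. -/
theorem stmt1 {V : Type*} [Fintype V] (G : SimpleGraph V) (hG : G.Connected)
    (n m δ : ℕ)
    (hn : Fintype.card V = n) (hm : G.edgeSet.ncard = m)
    (hδ : IsLeast (Set.range (ndeg G)) δ) :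
    AG G ≤ (1 / (2 * (δ : ℝ))) * Real.sqrt ((m : ℝ) * (forgottenIndex G + 2 * M2 G)) ∧
    (AG G = (1 / (2 * (δ : ℝ))) * Real.sqrt ((m : ℝ) * (forgottenIndex G + 2 * M2 G)) ↔
      ∃ r, ∀ v : V, ndeg G v = r) := by
  classical
  have hcard : (PF G).card = 2 * m := by rw [card_PF, hm]
  -- degree lower bound
  have hlb : ∀ v : V, (δ : ℝ) ≤ deg G v := fun v => by
    simp only [deg]
    exact_mod_cast hδ.2 ⟨v, rfl⟩
  rcases Nat.eq_zero_or_pos m with hm0 | hmpos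
  · -- no edges
    subst hm0
    have hPe : PF G = ∅ := Finset.card_eq_zero.1 (by omega)
    have hno : ∀ u w : V, ¬ G.Adj u w := by
      intro u w h
      have : (u, w) ∈ PF G := (mem_PF G).2 h
      simp [hPe] at this
    have hAG : AG G = 0 := by
      rw [AG, edgeSum_eq, hPe]; simp
    have hreg : ∀ v : V, ndeg G v = 0 := by
      intro v
      by_contra h
      have : 0 < ndeg G v := Nat.pos_of_ne_zero h
      rw [ndeg_eq] at this
      obtain ⟨w, hw⟩ := (G.degree_pos_iff_exists_adj v).1 this
      exact hno v w hw
    constructor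
    · rw [hAG]; positivity
    · constructor
      · intro _; exact ⟨0, hreg⟩
      · intro _; rw [hAG]; simp
  · -- m > 0 : there is an edge
    obtain ⟨e, he⟩ : G.edgeSet.Nonempty := by
      rw [← Set.ncard_pos (Set.toFinite _), hm]; exact hmpos
    obtain ⟨a, b⟩ := e
    have hab : G.Adj a b := he
    -- every vertex has a neighbor
    have hnbr : ∀ v : V, ∃ w, G.Adj v w := by
      intro v
      by_cases hva : v = a
      · exact ⟨b, hva ▸ hab⟩
      · obtain ⟨w⟩ := hG.preconnected v a
        cases w with
        | nil => exact absurd rfl hva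
        | cons h p => exact ⟨_, h⟩
    have hδ1 : 1 ≤ δ := by
      obtain ⟨v₀, hv₀⟩ := hδ.1
      obtain ⟨w, hw⟩ := hnbr v₀
      have := ndeg_pos_of_adj G hw
      omega
    have hδR : (1 : ℝ) ≤ (δ : ℝ) := by exact_mod_cast hδ1
    have hδpos : (0 : ℝ) < (δ : ℝ) := by linarith
    set P := PF G with hP
    -- positivity of degrees of members
    have hdeg_pos : ∀ v : V, 0 < deg G v := by
      intro v
      have := hlb v
      simp only [deg]
      have := ndeg_pos_of_adj G (hnbr v).choose_spec
      exact_mod_cast this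
    -- rewrite AG
    have hterm : ∀ p ∈ P, (Real.sqrt (deg G p.1 / deg G p.2) + Real.sqrt (deg G p.2 / deg G p.1)) / 2
        = (deg G p.1 + deg G p.2) / (2 * Real.sqrt (deg G p.1 * deg G p.2)) := by
      intro p _
      set x := deg G p.1; set y := deg G p.2
      have hx := hdeg_pos p.1; have hy := hdeg_pos p.2
      have hsx : Real.sqrt x > 0 := Real.sqrt_pos.2 hx
      have hsy : Real.sqrt y > 0 := Real.sqrt_pos.2 hy
      rw [Real.sqrt_div hx.le, Real.sqrt_div hy.le, Real.sqrt_mul hx.le]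
      rw [div_add_div _ _ (ne_of_gt hsy) (ne_of_gt hsx)]
      rw [Real.mul_self_sqrt hx.le, Real.mul_self_sqrt hy.le]
      rw [mul_comm (Real.sqrt y) (Real.sqrt x)]
      ring
    have hAG : AG G = (1/2) * ∑ p ∈ P, (deg G p.1 + deg G p.2) / (2 * Real.sqrt (deg G p.1 * deg G p.2)) := by
      rw [AG, edgeSum_eq, ← hP, Finset.sum_congr rfl hterm]
    -- F + 2 M2
    have hF : forgottenIndex G + 2 * M2 G = (1/2) * ∑ p ∈ P, (deg G p.1 + deg G p.2) ^ 2 := by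
      simp only [forgottenIndex, M2, edgeSum_eq, ← hP, Finset.mul_sum, ← Finset.sum_add_distrib]
      exact Finset.sum_congr rfl (fun p _ => by ring)
    set s1 := ∑ p ∈ P, (deg G p.1 + deg G p.2) with hs1
    set s2 := ∑ p ∈ P, (deg G p.1 + deg G p.2) ^ 2 with hs2
    have hs2nonneg : 0 ≤ s2 := Finset.sum_nonneg fun p _ => sq_nonneg _
    have hs1nonneg : 0 ≤ s1 := Finset.sum_nonneg fun p _ => by
      have := hdeg_pos p.1; have := hdeg_pos p.2; positivity
    -- term bound
    have htb : ∀ p ∈ P, (deg G p.1 + deg G p.2) / (2 * Real.sqrt (deg G p.1 * deg G p.2))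
        ≤ (deg G p.1 + deg G p.2) / (2 * (δ:ℝ)) := by
      intro p hp
      have hx := hdeg_pos p.1; have hy := hdeg_pos p.2
      have h1 : (δ:ℝ) ≤ Real.sqrt (deg G p.1 * deg G p.2) := by
        rw [show (δ:ℝ) = Real.sqrt ((δ:ℝ)^2) from (Real.sqrt_sq hδpos.le).symm]
        apply Real.sqrt_le_sqrt
        nlinarith [hlb p.1, hlb p.2]
      apply div_le_div_of_nonneg_left (by linarith) (by linarith) (by linarith)
    -- Cauchy-Schwarz
    have hCS : s1 ^ 2 ≤ (2 * m) * s2 := by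
      have := sq_sum_le_card_mul_sum_sq (s := P) (f := fun p => deg G p.1 + deg G p.2)
      rw [hcard] at this
      exact_mod_cast this
    have hs1le : s1 ≤ Real.sqrt ((2 * (m:ℝ)) * s2) := Real.le_sqrt_of_sq_le hCS
    -- rewrite RHS
    have hRHS : (1 / (2 * (δ : ℝ))) * Real.sqrt ((m : ℝ) * (forgottenIndex G + 2 * M2 G))
        = (1 / (4 * (δ:ℝ))) * Real.sqrt ((2 * (m:ℝ)) * s2) := by
      rw [hF]
      have h4 : (2 * (m:ℝ)) * s2 = 2 ^ 2 * ((m:ℝ) * ((1/2) * s2)) := by ring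
      rw [h4, Real.sqrt_mul (by norm_num : (0:ℝ) ≤ 2 ^ 2), Real.sqrt_sq (by norm_num : (0:ℝ) ≤ 2)]
      ring
    have hsum_bound : ∑ p ∈ P, (deg G p.1 + deg G p.2) / (2 * Real.sqrt (deg G p.1 * deg G p.2))
        ≤ s1 / (2 * (δ:ℝ)) := by
      rw [hs1, Finset.sum_div]
      exact Finset.sum_le_sum htb
    have hchain : s1 / (2 * (δ:ℝ)) ≤ Real.sqrt ((2 * (m:ℝ)) * s2) / (2 * (δ:ℝ)) := by
      gcongr
    have hmain : AG G ≤ (1 / (2 * (δ : ℝ))) * Real.sqrt ((m : ℝ) * (forgottenIndex G + 2 * M2 G)) := by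
      rw [hAG, hRHS]
      calc (1/2) * ∑ p ∈ P, (deg G p.1 + deg G p.2) / (2 * Real.sqrt (deg G p.1 * deg G p.2))
          ≤ (1/2) * (s1 / (2 * (δ:ℝ))) := by linarith [hsum_bound]
        _ ≤ (1/2) * (Real.sqrt ((2 * (m:ℝ)) * s2) / (2 * (δ:ℝ))) := by linarith [hchain]
        _ = (1 / (4 * (δ:ℝ))) * Real.sqrt ((2 * (m:ℝ)) * s2) := by ring
    refine ⟨hmain, ?_, ?_⟩
    · -- equality → regular
      intro heq
      by_contra hreg
      push_neg at hreg
      obtain ⟨v, hv⟩ : ∃ v : V, ndeg G v ≠ δ := by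
        by_contra h
        push_neg at h
        exact (hreg δ).elim fun w hw => hw (h w)
      have hvgt : (δ:ℝ) < deg G v := lt_of_le_of_ne (hlb v) (by
        simp only [deg]
        exact_mod_cast fun h => hv (by exact_mod_cast h.symm))
      obtain ⟨w, hw⟩ := hnbr v
      have hmem : (v, w) ∈ P := (mem_PF G).2 hw
      -- strict term bound at (v,w)
      have hstrict : (deg G v + deg G w) / (2 * Real.sqrt (deg G v * deg G w))
          < (deg G v + deg G w) / (2 * (δ:ℝ)) := by
        have hx := hdeg_pos v; have hy := hdeg_pos w
        have h1 : (δ:ℝ) < Real.sqrt (deg G v * deg G w) := by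
          rw [show (δ:ℝ) = Real.sqrt ((δ:ℝ)^2) from (Real.sqrt_sq hδpos.le).symm]
          apply Real.sqrt_lt_sqrt (by positivity)
          nlinarith [hlb w]
        apply div_lt_div_of_pos_left (by linarith) (by linarith) (by linarith)
      have hsum_strict : ∑ p ∈ P, (deg G p.1 + deg G p.2) / (2 * Real.sqrt (deg G p.1 * deg G p.2))
          < s1 / (2 * (δ:ℝ)) := by
        rw [hs1, Finset.sum_div]
        exact Finset.sum_lt_sum htb ⟨(v, w), hmem, hstrict⟩
      have : AG G < (1 / (2 * (δ : ℝ))) * Real.sqrt ((m : ℝ) * (forgottenIndex G + 2 * M2 G)) := by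
        rw [hAG, hRHS]
        calc (1/2) * ∑ p ∈ P, (deg G p.1 + deg G p.2) / (2 * Real.sqrt (deg G p.1 * deg G p.2))
            < (1/2) * (s1 / (2 * (δ:ℝ))) := by linarith [hsum_strict]
          _ ≤ (1/2) * (Real.sqrt ((2 * (m:ℝ)) * s2) / (2 * (δ:ℝ))) := by linarith [hchain]
          _ = (1 / (4 * (δ:ℝ))) * Real.sqrt ((2 * (m:ℝ)) * s2) := by ring
      linarith [heq ▸ this]
    · -- regular → equality
      rintro ⟨r, hr⟩
      have hrδ : r = δ := by
        obtain ⟨v₀, hv₀⟩ := hδ.1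
        rw [← hv₀, hr v₀]
      subst hrδ
      have hdall : ∀ v : V, deg G v = (r:ℝ) := fun v => by simp [deg, hr v]
      have hAGval : AG G = (m : ℝ) := by
        rw [hAG]
        have : ∀ p ∈ P, (deg G p.1 + deg G p.2) / (2 * Real.sqrt (deg G p.1 * deg G p.2)) = 1 := by
          intro p _
          rw [hdall p.1, hdall p.2, show (r:ℝ) * r = (r:ℝ)^2 by ring, Real.sqrt_sq hδpos.le]
          field_simp
          ring
        rw [Finset.sum_congr rfl this, Finset.sum_const, hcard]
        push_cast
        ring
      have hs2val : s2 = 8 * (m:ℝ) * (r:ℝ)^2 := by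
        rw [hs2]
        have : ∀ p ∈ P, (deg G p.1 + deg G p.2) ^ 2 = 4 * (r:ℝ)^2 := by
          intro p _
          rw [hdall p.1, hdall p.2]; ring
        rw [Finset.sum_congr rfl this, Finset.sum_const, hcard]
        push_cast
        ring
      rw [hAGval, hRHS, hs2val]
      rw [show (2 * (m:ℝ)) * (8 * (m:ℝ) * (r:ℝ)^2) = (4 * (m:ℝ) * (r:ℝ))^2 by ring,
        Real.sqrt_sq (by positivity)]
      field_simp
end

section
/- Let G be a finite simple connected graph of order n, size m, minimum degree δ and maximum degree Δ. Then AG(G) ≤ (1/(2δ))·√(F(G) + 2M₂(G) + 4m(m−1)Δ²), with equality if and only if G is regular. -/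
open SimpleGraph

/-!
On an edge with end degrees `x, y ≥ δ > 0`, `(√(x/y) + √(y/x))/2 = (x + y)/(2√(xy)) ≤ (x + y)/(2δ)`,
so `AG ≤ M₁/(2δ)`, with equality only if `x = y = δ` on every edge, i.e. only for regular graphs.
Write `M₁ = Σₑ sₑ` with `sₑ = d_u + d_v ≤ 2Δ` over the `m` edges; then `Σₑ sₑ² = F + 2M₂` and each
of the `m(m - 1)` cross terms of `M₁²` is at most `(2Δ)²`. If `δ = 0`, connectedness leaves a single
vertex and both sides vanish (`1/0 = 0` in Lean).
-/

open Finset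

theorem Finset.sq_sum_le_sum_sq_add_card_mul {ι R : Type*} [CommRing R] [LinearOrder R]
    [IsStrictOrderedRing R] (s : Finset ι) (a : ι → R) {A : R}
    (h0 : ∀ i ∈ s, 0 ≤ a i) (hA : ∀ i ∈ s, a i ≤ A) :
    (∑ i ∈ s, a i) ^ 2 ≤ ∑ i ∈ s, a i ^ 2 + #s * (#s - 1) * A ^ 2 := by
  classical
  have hrow : ∀ i ∈ s, ∑ j ∈ s, a i * a j ≤ a i ^ 2 + (#s - 1) * A ^ 2 := by
    intro i hi
    have hcross : ∑ j ∈ s.erase i, a i * a j ≤ #(s.erase i) • A ^ 2 :=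
      sum_le_card_nsmul _ _ _ fun j hj => by
        rw [sq]
        exact mul_le_mul (hA i hi) (hA j (mem_of_mem_erase hj)) (h0 j (mem_of_mem_erase hj))
          ((h0 i hi).trans (hA i hi))
    rw [card_erase_of_mem hi, nsmul_eq_mul, Nat.cast_pred (card_pos.2 ⟨i, hi⟩)] at hcross
    rw [← add_sum_erase _ _ hi, ← sq]
    exact (add_le_add_iff_left _).2 hcross
  calc (∑ i ∈ s, a i) ^ 2 = ∑ i ∈ s, ∑ j ∈ s, a i * a j := by rw [sq, sum_mul_sum]
    _ ≤ ∑ i ∈ s, (a i ^ 2 + (#s - 1) * A ^ 2) := sum_le_sum hrow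
    _ = ∑ i ∈ s, a i ^ 2 + #s * (#s - 1) * A ^ 2 := by
      rw [sum_add_distrib, sum_const, nsmul_eq_mul, mul_assoc]

theorem Real.sqrt_div_add_sqrt_div {x y : ℝ} (hx : 0 < x) (hy : 0 < y) :
    √(x / y) + √(y / x) = (x + y) / √(x * y) := by
  have hsx : 0 < √x := Real.sqrt_pos.2 hx
  have hsy : 0 < √y := Real.sqrt_pos.2 hy
  rw [Real.sqrt_div hx.le, Real.sqrt_div hy.le, Real.sqrt_mul hx.le,
    div_add_div _ _ hsy.ne' hsx.ne', Real.mul_self_sqrt hx.le, Real.mul_self_sqrt hy.le, mul_comm √y]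

theorem Real.le_sqrt_mul_of_le {c x y : ℝ} (hc : 0 ≤ c) (hx : c ≤ x) (hy : c ≤ y) :
    c ≤ √(x * y) :=
  Real.le_sqrt_of_sq_le (by rw [sq]; exact mul_le_mul hx hy hc (hc.trans hx))

theorem Real.sqrt_div_add_sqrt_div_le {c x y : ℝ} (hc : 0 < c) (hx : c ≤ x) (hy : c ≤ y) :
    (√(x / y) + √(y / x)) / 2 ≤ (x + y) / (2 * c) := by
  rw [Real.sqrt_div_add_sqrt_div (hc.trans_le hx) (hc.trans_le hy), div_div, mul_comm]
  have hc' := Real.le_sqrt_mul_of_le hc.le hx hy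
  gcongr
  linarith

theorem Real.eq_of_sqrt_div_add_sqrt_div_eq {c x y : ℝ} (hc : 0 < c) (hx : c ≤ x) (hy : c ≤ y)
    (h : (√(x / y) + √(y / x)) / 2 = (x + y) / (2 * c)) : x = c ∧ y = c := by
  have hxy : 0 < x * y := mul_pos (hc.trans_le hx) (hc.trans_le hy)
  rw [Real.sqrt_div_add_sqrt_div (hc.trans_le hx) (hc.trans_le hy), div_div, mul_comm,
    div_eq_div_iff (by positivity) (by positivity)] at h
  have hsqrt : √(x * y) = c := by
    have := mul_left_cancel₀ (by linarith : x + y ≠ 0) h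
    linarith
  have hprod : x * y = c ^ 2 := by rw [← hsqrt, Real.sq_sqrt hxy.le]
  constructor <;> nlinarith [mul_nonneg (sub_nonneg.2 hx) (sub_nonneg.2 hy)]

section Darts

variable {V M : Type*} [Fintype V] [AddCommMonoid M] (G : SimpleGraph V) [DecidableRel G.Adj]

theorem SimpleGraph.sum_ite_adj_eq_sum_dart (φ : V → V → M) :
    ∑ u, ∑ w, (if G.Adj u w then φ u w else 0) = ∑ d : G.Dart, φ d.fst d.snd := by
  rw [← Fintype.sum_prod_type', ← sum_filter]
  refine sum_bij' (fun p hp => ⟨p, (mem_filter.1 hp).2⟩) (fun d _ => d.toProd) ?_ ?_ ?_ ?_ ?_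
    <;> simp

theorem SimpleGraph.sum_dart_edge [DecidableEq V] (g : Sym2 V → M) :
    ∑ d : G.Dart, g d.edge = 2 • ∑ e ∈ G.edgeFinset, g e := by
  rw [← sum_fiberwise_of_maps_to' (t := G.edgeFinset) (fun d _ => by simp), smul_sum]
  refine sum_congr rfl fun e he => ?_
  rw [sum_const, G.dart_edge_fiber_card e (G.mem_edgeFinset.1 he)]

end Darts

theorem SimpleGraph.Connected.eq_of_degree_eq_zero {V : Type*} {G : SimpleGraph V}
    (hG : G.Connected) {v : V} [Fintype (G.neighborSet v)] (hv : G.degree v = 0) (u : V) :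
    u = v := by
  by_contra huv
  exact not_reachable_of_right_degree_zero huv hv (hG u v)

section EdgeSum

variable {V : Type*} [Fintype V] {G : SimpleGraph V}

theorem ndeg_eq_degree [DecidableRel G.Adj] (v : V) : ndeg G v = G.degree v := by
  unfold ndeg
  convert rfl

theorem deg_nonneg (v : V) : 0 ≤ deg G v := Nat.cast_nonneg _

theorem edgeSum_add (f g : ℝ → ℝ → ℝ) :
    edgeSum G (fun x y => f x y + g x y) = edgeSum G f + edgeSum G g := by
  simp only [edgeSum, ← mul_add, ← sum_add_distrib, ite_add_ite, add_zero]

theorem edgeSum_const_mul (c : ℝ) (f : ℝ → ℝ → ℝ) :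
    edgeSum G (fun x y => c * f x y) = c * edgeSum G f := by
  simp only [edgeSum, mul_sum, mul_ite, mul_zero]
  ring_nf

theorem edgeSum_div (c : ℝ) (f : ℝ → ℝ → ℝ) :
    edgeSum G (fun x y => f x y / c) = edgeSum G f / c := by
  simp only [div_eq_inv_mul]
  exact edgeSum_const_mul _ _

theorem edgeSum_mono {f g : ℝ → ℝ → ℝ}
    (h : ∀ u w, G.Adj u w → f (deg G u) (deg G w) ≤ g (deg G u) (deg G w)) :
    edgeSum G f ≤ edgeSum G g := by
  unfold edgeSum
  gcongr with u _ w _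
  split_ifs with huw
  exacts [h u w huw, le_rfl]

theorem apply_eq_of_edgeSum_eq {f g : ℝ → ℝ → ℝ}
    (h : ∀ u w, G.Adj u w → f (deg G u) (deg G w) ≤ g (deg G u) (deg G w))
    (heq : edgeSum G f = edgeSum G g) {u w : V} (huw : G.Adj u w) :
    f (deg G u) (deg G w) = g (deg G u) (deg G w) := by
  classical
  have hterm : ∀ u w, (if G.Adj u w then f (deg G u) (deg G w) else 0) ≤
      if G.Adj u w then g (deg G u) (deg G w) else 0 := fun u w => by
    split_ifs with huw
    exacts [h u w huw, le_rfl]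
  unfold edgeSum at heq
  have hrows := (sum_eq_sum_iff_of_le fun u _ => sum_le_sum fun w _ => hterm u w).1
    (mul_left_cancel₀ (by norm_num) heq)
  have := (sum_eq_sum_iff_of_le fun w _ => hterm u w).1 (hrows u (mem_univ u)) w (mem_univ w)
  simpa [huw] using this

theorem edgeSum_eq_sum_edgeFinset [DecidableEq V] [DecidableRel G.Adj] (f : ℝ → ℝ → ℝ)
    (g : Sym2 V → ℝ) (hg : ∀ u w, G.Adj u w → g s(u, w) = f (deg G u) (deg G w)) :
    edgeSum G f = ∑ e ∈ G.edgeFinset, g e := by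
  have hsum : ∑ u, ∑ w, (if G.Adj u w then f (deg G u) (deg G w) else 0) =
      2 • ∑ e ∈ G.edgeFinset, g e := by
    rw [G.sum_ite_adj_eq_sum_dart, ← G.sum_dart_edge]
    exact sum_congr rfl fun d _ => (hg _ _ d.adj).symm
  calc edgeSum G f = 1 / 2 * ∑ u, ∑ w, (if G.Adj u w then f (deg G u) (deg G w) else 0) := by
        unfold edgeSum
        convert rfl
    _ = ∑ e ∈ G.edgeFinset, g e := by rw [hsum, nsmul_eq_mul]; push_cast; ring

end EdgeSum

section Indices

variable {V : Type*} [Fintype V] {G : SimpleGraph V}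

theorem AG_le_M1_div {δ : ℝ} (hδ : 0 < δ) (hle : ∀ v, δ ≤ deg G v) :
    AG G ≤ M1 G / (2 * δ) := by
  rw [M1, ← edgeSum_div]
  exact edgeSum_mono fun u w _ => Real.sqrt_div_add_sqrt_div_le hδ (hle u) (hle w)

theorem deg_eq_of_AG_eq_M1_div {δ : ℝ} (hδ : 0 < δ) (hle : ∀ v, δ ≤ deg G v)
    (heq : AG G = M1 G / (2 * δ)) (v : V) : deg G v = δ := by
  classical
  have hv : 0 < G.degree v := by
    rw [← ndeg_eq_degree]
    exact Nat.cast_pos.1 (hδ.trans_le (hle v))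
  obtain ⟨w, hvw⟩ := (G.degree_pos_iff_exists_adj v).1 hv
  rw [M1, ← edgeSum_div] at heq
  exact (Real.eq_of_sqrt_div_add_sqrt_div_eq hδ (hle v) (hle w) (apply_eq_of_edgeSum_eq
    (fun u w _ => Real.sqrt_div_add_sqrt_div_le hδ (hle u) (hle w)) heq hvw)).1

theorem M1_sq_le {Δ : ℝ} (hle : ∀ v, deg G v ≤ Δ) :
    M1 G ^ 2 ≤ forgottenIndex G + 2 * M2 G +
      4 * (G.edgeSet.ncard : ℝ) * ((G.edgeSet.ncard : ℝ) - 1) * Δ ^ 2 := by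
  classical
  let s : Sym2 V → ℝ := Sym2.lift ⟨fun u w => deg G u + deg G w, fun _ _ => add_comm _ _⟩
  have hM1 : M1 G = ∑ e ∈ G.edgeFinset, s e :=
    edgeSum_eq_sum_edgeFinset _ _ fun _ _ _ => rfl
  have hsq : forgottenIndex G + 2 * M2 G = ∑ e ∈ G.edgeFinset, s e ^ 2 := by
    rw [forgottenIndex, M2, ← edgeSum_const_mul, ← edgeSum_add]
    exact edgeSum_eq_sum_edgeFinset _ _ fun u w _ => by simp only [s, Sym2.lift_mk]; ring
  have hm : G.edgeSet.ncard = #G.edgeFinset := by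
    rw [Set.ncard_eq_toFinset_card']
    rfl
  have hs : ∀ e ∈ G.edgeFinset, 0 ≤ s e ∧ s e ≤ 2 * Δ := by
    intro e _
    induction e using Sym2.ind with
    | _ u w =>
      simp only [s, Sym2.lift_mk]
      constructor <;> linarith [deg_nonneg (G := G) u, deg_nonneg (G := G) w, hle u, hle w]
  have key := sq_sum_le_sum_sq_add_card_mul G.edgeFinset s (fun e he => (hs e he).1)
    (fun e he => (hs e he).2)
  rw [hM1, hsq, hm]
  linarith

theorem edgeSum_of_regular {r : ℕ} (hr : ∀ v, ndeg G v = r) (f : ℝ → ℝ → ℝ) :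
    edgeSum G f = G.edgeSet.ncard * f r r := by
  classical
  rw [edgeSum_eq_sum_edgeFinset f (fun _ => f r r) fun u w _ => by simp only [deg, hr],
    sum_const, nsmul_eq_mul, Set.ncard_eq_toFinset_card']
  rfl

theorem AG_eq_of_regular {r : ℕ} (hr : ∀ v, ndeg G v = r) :
    AG G = (1 / (2 * (r : ℝ))) * √(forgottenIndex G + 2 * M2 G +
      4 * (G.edgeSet.ncard : ℝ) * ((G.edgeSet.ncard : ℝ) - 1) * (r : ℝ) ^ 2) := by
  rcases Nat.eq_zero_or_pos r with rfl | hr_pos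
  · simp [AG, edgeSum_of_regular hr]
  have hr' : (0 : ℝ) < r := Nat.cast_pos.2 hr_pos
  rw [AG, forgottenIndex, M2, edgeSum_of_regular hr, edgeSum_of_regular hr,
    edgeSum_of_regular hr, div_self hr'.ne', Real.sqrt_one,
    show ∀ m : ℝ, m * ((r : ℝ) ^ 2 + (r : ℝ) ^ 2) + 2 * (m * (r * r)) + 4 * m * (m - 1) * r ^ 2
      = (2 * m * r) ^ 2 from fun m => by ring, Real.sqrt_sq (by positivity)]
  field_simp
  ring

end Indices

theorem stmt3_general {V : Type*} [Fintype V] (G : SimpleGraph V) (hG : G.Connected)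
    (m δ Δ : ℕ)
    (hm : G.edgeSet.ncard = m)
    (hδ : IsLeast (Set.range (ndeg G)) δ)
    (hΔ : IsGreatest (Set.range (ndeg G)) Δ) :
    AG G ≤ (1 / (2 * (δ : ℝ))) *
      Real.sqrt (forgottenIndex G + 2 * M2 G + 4 * (m : ℝ) * ((m : ℝ) - 1) * (Δ : ℝ) ^ 2) ∧
    (AG G = (1 / (2 * (δ : ℝ))) *
      Real.sqrt (forgottenIndex G + 2 * M2 G + 4 * (m : ℝ) * ((m : ℝ) - 1) * (Δ : ℝ) ^ 2) ↔
      ∃ r, ∀ v : V, ndeg G v = r) := by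
  subst hm
  have hδ_le (v : V) : (δ : ℝ) ≤ deg G v := Nat.cast_le.2 (hδ.2 ⟨v, rfl⟩)
  have hle_Δ (v : V) : deg G v ≤ Δ := Nat.cast_le.2 (hΔ.2 ⟨v, rfl⟩)
  have eq_of_regular : (∃ r, ∀ v, ndeg G v = r) → AG G = (1 / (2 * (δ : ℝ))) *
      √(forgottenIndex G + 2 * M2 G +
        4 * (G.edgeSet.ncard : ℝ) * ((G.edgeSet.ncard : ℝ) - 1) * (Δ : ℝ) ^ 2) := by
    rintro ⟨r, hr⟩
    obtain ⟨⟨u, rfl⟩, _⟩ := hδ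
    obtain ⟨⟨w, rfl⟩, _⟩ := hΔ
    rw [hr u, hr w]
    exact AG_eq_of_regular hr
  rcases Nat.eq_zero_or_pos δ with rfl | hδ_pos
  · classical
    obtain ⟨v, hv⟩ := hδ.1
    rw [ndeg_eq_degree] at hv
    have hreg : ∃ r, ∀ u, ndeg G u = r := ⟨ndeg G v, fun u => by rw [hG.eq_of_degree_eq_zero hv u]⟩
    exact ⟨(eq_of_regular hreg).le, fun _ => hreg, fun _ => eq_of_regular hreg⟩
  replace hδ_pos : (0 : ℝ) < δ := Nat.cast_pos.2 hδ_pos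
  have hAG := AG_le_M1_div hδ_pos hδ_le
  have hM1 : M1 G / (2 * δ) ≤ (1 / (2 * (δ : ℝ))) * √(forgottenIndex G + 2 * M2 G +
      4 * (G.edgeSet.ncard : ℝ) * ((G.edgeSet.ncard : ℝ) - 1) * (Δ : ℝ) ^ 2) := by
    rw [one_div_mul_eq_div]
    gcongr
    exact (le_abs_self _).trans (Real.abs_le_sqrt (M1_sq_le hle_Δ))
  refine ⟨hAG.trans hM1, fun heq => ⟨δ, fun v => ?_⟩, eq_of_regular⟩
  exact Nat.cast_injective (deg_eq_of_AG_eq_M1_div hδ_pos hδ_le (le_antisymm hAG (heq ▸ hM1)) v)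

/-- Corollary 2 of the paper. -/
theorem stmt3 {V : Type*} [Fintype V] (G : SimpleGraph V) (hG : G.Connected)
    (n m δ Δ : ℕ)
    (hn : Fintype.card V = n) (hm : G.edgeSet.ncard = m)
    (hδ : IsLeast (Set.range (ndeg G)) δ)
    (hΔ : IsGreatest (Set.range (ndeg G)) Δ) :
    AG G ≤ (1 / (2 * (δ : ℝ))) *
      Real.sqrt (forgottenIndex G + 2 * M2 G + 4 * (m : ℝ) * ((m : ℝ) - 1) * (Δ : ℝ) ^ 2) ∧
    (AG G = (1 / (2 * (δ : ℝ))) *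
      Real.sqrt (forgottenIndex G + 2 * M2 G + 4 * (m : ℝ) * ((m : ℝ) - 1) * (Δ : ℝ) ^ 2) ↔
      ∃ r, ∀ v : V, ndeg G v = r) :=
  stmt3_general G hG m δ Δ hm hδ hΔ
end

section
/- Let G be a finite simple connected graph of order n, size m, maximum degree Δ and minimum degree δ, having no pendent vertices (δ ≥ 2). Then AG(G) ≥ (√(2m(Δ+δ)√(Δδ)) / (Δ(Δ+δ+2√(Δδ))))·√(F(G) + 2mΔ²), with equality if and only if G is regular. -/
open SimpleGraph

open SimpleGraph Finset

section Helpers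

variable {V : Type*} [Fintype V] (G : SimpleGraph V)

noncomputable def esum (f : ℝ → ℝ → ℝ) : ℝ :=
  letI := Classical.decRel G.Adj
  ∑ u : V, ∑ w : V, if G.Adj u w then f (deg G u) (deg G w) else 0

lemma edgeSum_eq_s7 (f : ℝ → ℝ → ℝ) : edgeSum G f = (1 / 2) * esum G f := rfl

lemma esum_congr (f g : ℝ → ℝ → ℝ)
    (h : ∀ u w, G.Adj u w → f (deg G u) (deg G w) = g (deg G u) (deg G w)) :
    esum G f = esum G g := by
  unfold esum
  refine Finset.sum_congr rfl fun u _ => Finset.sum_congr rfl fun w _ => ?_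
  split_ifs with hadj
  · exact h u w hadj
  · rfl

lemma esum_le (f g : ℝ → ℝ → ℝ)
    (h : ∀ u w, G.Adj u w → f (deg G u) (deg G w) ≤ g (deg G u) (deg G w)) :
    esum G f ≤ esum G g := by
  unfold esum
  refine Finset.sum_le_sum fun u _ => Finset.sum_le_sum fun w _ => ?_
  split_ifs with hadj
  · exact h u w hadj
  · exact le_rfl

lemma esum_sub (f g : ℝ → ℝ → ℝ) :
    esum G (fun x y => f x y - g x y) = esum G f - esum G g := by
  unfold esum
  rw [← Finset.sum_sub_distrib]
  refine Finset.sum_congr rfl fun u _ => ?_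
  rw [← Finset.sum_sub_distrib]
  refine Finset.sum_congr rfl fun w _ => ?_
  split_ifs <;> ring

lemma esum_const (c : ℝ) : esum G (fun _ _ => c) = c * esum G (fun _ _ => 1) := by
  unfold esum
  rw [Finset.mul_sum]
  refine Finset.sum_congr rfl fun u _ => ?_
  rw [Finset.mul_sum]
  refine Finset.sum_congr rfl fun w _ => ?_
  split_ifs <;> ring

lemma esum_one : esum G (fun _ _ => (1 : ℝ)) = 2 * G.edgeSet.ncard := by
  classical
  unfold esum
  have h1 : ∀ u : V, (∑ w : V, if G.Adj u w then (1 : ℝ) else 0) = (G.degree u : ℝ) := by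
    intro u
    rw [Finset.sum_boole, SimpleGraph.degree, neighborFinset_eq_filter]
  calc (∑ u : V, ∑ w : V, if G.Adj u w then (1 : ℝ) else 0)
      = ∑ u : V, (G.degree u : ℝ) := Finset.sum_congr rfl fun u _ => h1 u
    _ = ((∑ u : V, G.degree u : ℕ) : ℝ) := by push_cast; rfl
    _ = 2 * G.edgeSet.ncard := by
        rw [G.sum_degrees_eq_twice_card_edges]
        rw [Set.ncard_eq_toFinset_card']
        push_cast
        congr 1

lemma esum_forces_zero (f : ℝ → ℝ → ℝ)
    (hnn : ∀ u w, G.Adj u w → 0 ≤ f (deg G u) (deg G w))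
    (h0 : esum G f = 0) : ∀ u w, G.Adj u w → f (deg G u) (deg G w) = 0 := by
  letI := Classical.decRel G.Adj
  unfold esum at h0
  intro u w hadj
  have hterm : ∀ a b : V, 0 ≤ (if G.Adj a b then f (deg G a) (deg G b) else 0) := by
    intro a b
    split_ifs with h
    · exact hnn a b h
    · exact le_rfl
  have h1 := (Finset.sum_eq_zero_iff_of_nonneg
    (fun a _ => Finset.sum_nonneg fun b _ => hterm a b)).1 h0 u (Finset.mem_univ u)
  have h2 := (Finset.sum_eq_zero_iff_of_nonneg (fun b _ => hterm u b)).1 h1 w (Finset.mem_univ w)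
  simpa [hadj] using h2

lemma ag_term_ge {x y : ℝ} (hx : 0 < x) (hy : 0 < y) :
    1 ≤ (Real.sqrt (x / y) + Real.sqrt (y / x)) / 2 := by
  have ht : 0 < Real.sqrt (x / y) := Real.sqrt_pos.2 (div_pos hx hy)
  have hinv : Real.sqrt (y / x) = (Real.sqrt (x / y))⁻¹ := by
    rw [← Real.sqrt_inv, inv_div]
  rw [hinv, le_div_iff₀ (by norm_num : (0:ℝ) < 2)]
  have hu : 0 < (Real.sqrt (x / y))⁻¹ := inv_pos.2 ht
  have hti : Real.sqrt (x / y) * (Real.sqrt (x / y))⁻¹ = 1 := mul_inv_cancel₀ ht.ne'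
  nlinarith [sq_nonneg (Real.sqrt (x / y) - (Real.sqrt (x / y))⁻¹), hti, ht, hu,
    mul_pos ht hu]

lemma ag_term_eq {x y : ℝ} (hx : 0 < x) (hy : 0 < y)
    (h : (Real.sqrt (x / y) + Real.sqrt (y / x)) / 2 = 1) : x = y := by
  have ht : 0 < Real.sqrt (x / y) := Real.sqrt_pos.2 (div_pos hx hy)
  have hinv : Real.sqrt (y / x) = (Real.sqrt (x / y))⁻¹ := by
    rw [← Real.sqrt_inv, inv_div]
  rw [hinv] at h
  have h2 : Real.sqrt (x / y) + (Real.sqrt (x / y))⁻¹ = 2 := by linarith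
  have hti : Real.sqrt (x / y) * (Real.sqrt (x / y))⁻¹ = 1 := mul_inv_cancel₀ ht.ne'
  have h1 : Real.sqrt (x / y) = 1 := by
    have h0 : (Real.sqrt (x / y) - 1) ^ 2 = 0 :=
      le_antisymm (by nlinarith) (sq_nonneg _)
    have := sq_eq_zero_iff.1 h0
    linarith
  have h3 : x / y = 1 := Real.sqrt_eq_one.1 h1
  rw [div_eq_one_iff_eq hy.ne'] at h3
  exact h3

lemma walk_deg_eq {V : Type*} [Fintype V] {G : SimpleGraph V}
    (h : ∀ u w, G.Adj u w → ndeg G u = ndeg G w) :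
    ∀ {u v : V}, G.Walk u v → ndeg G u = ndeg G v := by
  intro u v p
  induction p with
  | nil => rfl
  | cons ha _ ih => exact (h _ _ ha).trans ih

lemma coeff_le (m A d : ℝ) (hm : 0 ≤ m) (hd : 0 < d) (hdA : d ≤ A) :
    Real.sqrt (2 * m * (A + d) * Real.sqrt (A * d)) / (A * (A + d + 2 * Real.sqrt (A * d))) *
      (2 * A * Real.sqrt m) ≤ m := by
  set t := Real.sqrt (A * d) with ht
  have hA : 0 < A := lt_of_lt_of_le hd hdA
  have htpos : 0 < t := Real.sqrt_pos.2 (by positivity)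
  have hden : 0 < A * (A + d + 2 * t) := by positivity
  rw [div_mul_eq_mul_div, div_le_iff₀ hden]
  have h1 : Real.sqrt (2 * m * (A + d) * t) = Real.sqrt m * Real.sqrt (2 * (A + d) * t) := by
    rw [show 2 * m * (A + d) * t = m * (2 * (A + d) * t) by ring, Real.sqrt_mul hm]
  have hsq : Real.sqrt (2 * (A + d) * t) ≤ (A + d + 2 * t) / 2 := by
    rw [Real.sqrt_le_iff]
    constructor
    · positivity
    · nlinarith [sq_nonneg (A + d - 2 * t)]
  have hmm : Real.sqrt m * Real.sqrt m = m := Real.mul_self_sqrt hm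
  calc Real.sqrt (2 * m * (A + d) * t) * (2 * A * Real.sqrt m)
      = 2 * A * (Real.sqrt m * Real.sqrt m) * Real.sqrt (2 * (A + d) * t) := by rw [h1]; ring
    _ = 2 * A * m * Real.sqrt (2 * (A + d) * t) := by rw [hmm]
    _ ≤ 2 * A * m * ((A + d + 2 * t) / 2) := by
        apply mul_le_mul_of_nonneg_left hsq (by positivity)
    _ = m * (A * (A + d + 2 * t)) := by ring

end Helpers

/-- Corollary 4 of the paper. -/
theorem stmt7 {V : Type*} [Fintype V] (G : SimpleGraph V) (hG : G.Connected)
    (n m Δ δ : ℕ)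
    (hn : Fintype.card V = n) (hm : G.edgeSet.ncard = m)
    (hΔ : IsGreatest (Set.range (ndeg G)) Δ)
    (hδ : IsLeast (Set.range (ndeg G)) δ)
    (hnopendent : 2 ≤ δ) :
    AG G ≥ (Real.sqrt (2 * (m : ℝ) * ((Δ : ℝ) + δ) * Real.sqrt ((Δ : ℝ) * δ)) /
        ((Δ : ℝ) * ((Δ : ℝ) + δ + 2 * Real.sqrt ((Δ : ℝ) * δ)))) *
        Real.sqrt (forgottenIndex G + 2 * (m : ℝ) * (Δ : ℝ) ^ 2) ∧
    (AG G = (Real.sqrt (2 * (m : ℝ) * ((Δ : ℝ) + δ) * Real.sqrt ((Δ : ℝ) * δ)) /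
        ((Δ : ℝ) * ((Δ : ℝ) + δ + 2 * Real.sqrt ((Δ : ℝ) * δ)))) *
        Real.sqrt (forgottenIndex G + 2 * (m : ℝ) * (Δ : ℝ) ^ 2) ↔
      ∃ r, ∀ v : V, ndeg G v = r) := by
  classical
  -- basic degree facts
  obtain ⟨vΔ, hvΔ⟩ := hΔ.1
  have hδΔ : δ ≤ Δ := hδ.2 hΔ.1
  have hdub : ∀ v, deg G v ≤ (Δ : ℝ) := by
    intro v; unfold deg; exact_mod_cast hΔ.2 (Set.mem_range_self v)
  have hdlb : ∀ v, (δ : ℝ) ≤ deg G v := by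
    intro v; unfold deg; exact_mod_cast hδ.2 (Set.mem_range_self v)
  have hδ2 : (2 : ℝ) ≤ (δ : ℝ) := by exact_mod_cast hnopendent
  have hdpos : ∀ v, 0 < deg G v := fun v => lt_of_lt_of_le (by linarith) (hdlb v)
  have hδR : (0 : ℝ) < (δ : ℝ) := by linarith
  have hΔR : (δ : ℝ) ≤ (Δ : ℝ) := by exact_mod_cast hδΔ
  have hΔpos : (0 : ℝ) < (Δ : ℝ) := lt_of_lt_of_le hδR hΔR
  have hm0 : (0 : ℝ) ≤ (m : ℝ) := Nat.cast_nonneg m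
  set gfun : ℝ → ℝ → ℝ := fun x y => (Real.sqrt (x / y) + Real.sqrt (y / x)) / 2 with hgfun
  have hE1 : esum G (fun _ _ => (1 : ℝ)) = 2 * (m : ℝ) := by rw [esum_one, hm]
  have hAGdef : AG G = (1 / 2) * esum G gfun := rfl
  -- AG ≥ m
  have hAGm : (m : ℝ) ≤ AG G := by
    have h := esum_le G (fun _ _ => (1 : ℝ)) gfun
      (fun u w _ => ag_term_ge (hdpos u) (hdpos w))
    rw [hE1] at h
    rw [hAGdef]; linarith
  -- F ≤ 2 m Δ²
  have hF : forgottenIndex G ≤ 2 * (m : ℝ) * (Δ : ℝ) ^ 2 := by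
    have h1 : esum G (fun x y => x ^ 2 + y ^ 2) ≤ esum G (fun _ _ => 2 * (Δ : ℝ) ^ 2) := by
      refine esum_le G _ _ fun u w _ => ?_
      nlinarith [hdub u, hdub w, (hdpos u).le, (hdpos w).le]
    rw [esum_const, hE1] at h1
    have h2 : forgottenIndex G = (1 / 2) * esum G (fun x y => x ^ 2 + y ^ 2) := rfl
    rw [h2]; linarith
  set C : ℝ := Real.sqrt (2 * (m : ℝ) * ((Δ : ℝ) + δ) * Real.sqrt ((Δ : ℝ) * δ)) /
      ((Δ : ℝ) * ((Δ : ℝ) + δ + 2 * Real.sqrt ((Δ : ℝ) * δ))) with hC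
  have htpos : 0 < Real.sqrt ((Δ : ℝ) * δ) := Real.sqrt_pos.2 (by positivity)
  have hCnn : 0 ≤ C := by
    apply div_nonneg (Real.sqrt_nonneg _)
    positivity
  -- RHS ≤ m
  have hRHS : C * Real.sqrt (forgottenIndex G + 2 * (m : ℝ) * (Δ : ℝ) ^ 2) ≤ (m : ℝ) := by
    have hs : Real.sqrt (forgottenIndex G + 2 * (m : ℝ) * (Δ : ℝ) ^ 2)
        ≤ 2 * (Δ : ℝ) * Real.sqrt m := by
      calc Real.sqrt (forgottenIndex G + 2 * (m : ℝ) * (Δ : ℝ) ^ 2)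
          ≤ Real.sqrt ((2 * (Δ : ℝ)) ^ 2 * m) := by
            apply Real.sqrt_le_sqrt; nlinarith
        _ = 2 * (Δ : ℝ) * Real.sqrt m := by
            rw [Real.sqrt_mul (by positivity), Real.sqrt_sq (by positivity)]
    calc C * Real.sqrt (forgottenIndex G + 2 * (m : ℝ) * (Δ : ℝ) ^ 2)
        ≤ C * (2 * (Δ : ℝ) * Real.sqrt m) := mul_le_mul_of_nonneg_left hs hCnn
      _ ≤ (m : ℝ) := coeff_le (m : ℝ) (Δ : ℝ) (δ : ℝ) hm0 hδR hΔR
  refine ⟨le_trans hRHS hAGm, ?_, ?_⟩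
  · -- equality → regular
    intro heq
    have hAGeq : AG G = (m : ℝ) := le_antisymm (by rw [heq]; exact hRHS) hAGm
    have hsum0 : esum G (fun x y => gfun x y - 1) = 0 := by
      rw [esum_sub, hE1]
      have : esum G gfun = 2 * (m : ℝ) := by
        rw [hAGdef] at hAGeq; linarith
      rw [this]; ring
    have hforce := esum_forces_zero G (fun x y => gfun x y - 1)
      (fun u w _ => by
        have := ag_term_ge (hdpos u) (hdpos w); simp only [hgfun]; linarith) hsum0
    have hadj_eq : ∀ u w, G.Adj u w → ndeg G u = ndeg G w := by
      intro u w hadj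
      have h1 : gfun (deg G u) (deg G w) - 1 = 0 := hforce u w hadj
      have h2 : gfun (deg G u) (deg G w) = 1 := by linarith
      have h3 : deg G u = deg G w := ag_term_eq (hdpos u) (hdpos w) h2
      unfold deg at h3
      exact_mod_cast h3
    obtain ⟨v0⟩ := hG.nonempty
    refine ⟨ndeg G v0, fun v => ?_⟩
    obtain ⟨p⟩ := hG.preconnected v v0
    exact walk_deg_eq hadj_eq p
  · -- regular → equality
    rintro ⟨r, hr⟩
    have hΔr : Δ = r := by rw [← hvΔ, hr vΔ]
    have hδr : δ = r := by
      obtain ⟨vδ, hvδ⟩ := hδ.1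
      rw [← hvδ, hr vδ]
    subst hΔr
    set R : ℝ := (Δ : ℝ) with hR
    have hdr : ∀ v, deg G v = R := by
      intro v; simp only [deg, hr v, hR]
    have hR2 : (2 : ℝ) ≤ R := by rw [hR]; exact le_trans hδ2 hΔR
    have hRpos : (0 : ℝ) < R := by linarith
    -- AG = m
    have hAGr : AG G = (m : ℝ) := by
      have h1 : esum G gfun = esum G (fun _ _ => (1 : ℝ)) := by
        refine esum_congr G _ _ fun u w _ => ?_
        rw [hdr u, hdr w]
        simp only [hgfun]
        rw [div_self hRpos.ne', Real.sqrt_one]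
        norm_num
      rw [hAGdef, h1, hE1]; ring
    -- F = 2 m R²
    have hFr : forgottenIndex G = 2 * (m : ℝ) * R ^ 2 := by
      have h1 : esum G (fun x y => x ^ 2 + y ^ 2) = esum G (fun _ _ => 2 * R ^ 2) := by
        refine esum_congr G _ _ fun u w _ => ?_
        rw [hdr u, hdr w]; ring
      have h2 : forgottenIndex G = (1 / 2) * esum G (fun x y => x ^ 2 + y ^ 2) := rfl
      rw [h2, h1, esum_const, hE1]; ring
    rw [hAGr, hFr, hC, hδr]
    have hRR : Real.sqrt (R * R) = R := Real.sqrt_mul_self hRpos.le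
    have hmm : Real.sqrt (m : ℝ) * Real.sqrt (m : ℝ) = (m : ℝ) := Real.mul_self_sqrt hm0
    have hnum : Real.sqrt (2 * (m : ℝ) * (R + R) * Real.sqrt (R * R))
        = 2 * R * Real.sqrt (m : ℝ) := by
      rw [hRR, show 2 * (m : ℝ) * (R + R) * R = (2 * R) ^ 2 * m by ring,
        Real.sqrt_mul (by positivity), Real.sqrt_sq (by positivity)]
    have hlast : Real.sqrt (2 * (m : ℝ) * R ^ 2 + 2 * (m : ℝ) * R ^ 2)
        = 2 * R * Real.sqrt (m : ℝ) := by
      rw [show 2 * (m : ℝ) * R ^ 2 + 2 * (m : ℝ) * R ^ 2 = (2 * R) ^ 2 * m by ring,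
        Real.sqrt_mul (by positivity), Real.sqrt_sq (by positivity)]
    push_cast [hδr] at hnum hlast ⊢
    simp only [← hR]
    rw [hnum, hlast, hRR]
    rw [div_mul_eq_mul_div, eq_div_iff (by positivity)]
    linear_combination (-4 * R ^ 2) * hmm
end
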